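/- arXiv:2212.05619 — 9 statements merged into one kernel-verified Lean document; each statement's English description precedes it below -/
import Mathlib

section
/- Let G be a graph on n vertices, let ℓ ≥ 1 be an integer, let 0 < δ < 1, and let k be an integer with k > 2·√(n·ℓ/δ). Then the number of ℓ-good k-cliques in G is at most (1+δ)·n/k. -/
/-- `S` is an `ℓ`-good `k`-clique of `G`: it is a clique of size `k`, and every biclique
`(L, R)` in the bipartite graph with left side `S`, right side `[n] \ S`, and edge set
`cut_G(S)` satisfies `|L| ≤ ℓ` whenever `|R| ≥ 1` and `|L| + |R| = k`. -/
def IsGoodClique {n : ℕ} (G : SimpleGraph (Fin n)) (k ℓ : ℕ) (S : Finset (Fin n)) : Prop :=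
  S.card = k ∧ G.IsClique (S : Set (Fin n)) ∧
    ∀ L R : Finset (Fin n), L ⊆ S → (∀ v ∈ R, v ∉ S) →
      (∀ u ∈ L, ∀ v ∈ R, G.Adj u v) → 1 ≤ R.card → L.card + R.card = k → L.card ≤ ℓ

/-- Two distinct `ℓ`-good `k`-cliques intersect in at most `ℓ` vertices. -/
lemma good_inter_le {n k ℓ : ℕ} {G : SimpleGraph (Fin n)} {S T : Finset (Fin n)}
    (hS : IsGoodClique G k ℓ S) (hT : IsGoodClique G k ℓ T) (hne : S ≠ T) :
    (S ∩ T).card ≤ ℓ := by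
  obtain ⟨hSk, _, hSgood⟩ := hS
  obtain ⟨hTk, hTcl, _⟩ := hT
  have h2 : ∀ v ∈ T \ S, v ∉ S := fun v hv => (Finset.mem_sdiff.1 hv).2
  have h3 : ∀ u ∈ S ∩ T, ∀ v ∈ T \ S, G.Adj u v := by
    intro u hu v hv
    have hu' : u ∈ T := (Finset.mem_inter.1 hu).2
    have hv' := Finset.mem_sdiff.1 hv
    exact hTcl (Finset.mem_coe.2 hu') (Finset.mem_coe.2 hv'.1)
      (fun h => hv'.2 (h ▸ (Finset.mem_inter.1 hu).1))
  have hsum : (S ∩ T).card + (T \ S).card = k := by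
    rw [Finset.inter_comm, Finset.card_inter_add_card_sdiff]; exact hTk
  have hR : 1 ≤ (T \ S).card := by
    rcases Finset.eq_empty_or_nonempty (T \ S) with h | h
    · exfalso; apply hne
      have hsub : T ⊆ S := by rwa [Finset.sdiff_eq_empty_iff_subset] at h
      exact (Finset.eq_of_subset_of_card_le hsub (by rw [hSk, hTk])).symm
    · exact Finset.card_pos.2 h
  exact hSgood _ _ Finset.inter_subset_left h2 h3 hR hsum

/-- A family of `k`-sets with pairwise intersections of size at most `ℓ` covers at least
`|𝒮|·k - ℓ·C(|𝒮|,2)` elements. -/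
lemma count_lemma {n k ℓ : ℕ} :
    ∀ 𝒮 : Finset (Finset (Fin n)),
    (∀ A ∈ 𝒮, A.card = k) →
    (∀ A ∈ 𝒮, ∀ B ∈ 𝒮, A ≠ B → (A ∩ B).card ≤ ℓ) →
    𝒮.card * k ≤ (𝒮.biUnion id).card + ℓ * 𝒮.card.choose 2 := by
  intro 𝒮
  induction 𝒮 using Finset.induction_on with
  | empty => simp
  | @insert A 𝒮 hA ih =>
    intro hcard hint
    have ih' := ih (fun B hB => hcard B (Finset.mem_insert_of_mem hB))
      (fun B hB C hC h => hint B (Finset.mem_insert_of_mem hB) C (Finset.mem_insert_of_mem hC) h)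
    set U := 𝒮.biUnion id with hU
    have hkey : k ≤ (A \ U).card + ℓ * 𝒮.card := by
      have h1 : (A \ U).card + (A ∩ U).card = A.card := Finset.card_sdiff_add_card_inter A U
      have h2 : A ∩ U = 𝒮.biUnion (fun B => A ∩ B) := by
        ext x; simp [hU, Finset.mem_biUnion]
        tauto
      have h3 : (A ∩ U).card ≤ ℓ * 𝒮.card := by
        rw [h2]
        calc (𝒮.biUnion (fun B => A ∩ B)).card ≤ ∑ B ∈ 𝒮, (A ∩ B).card :=
              Finset.card_biUnion_le
          _ ≤ ∑ B ∈ 𝒮, ℓ := Finset.sum_le_sum (fun B hB =>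
              hint A (Finset.mem_insert_self A 𝒮) B (Finset.mem_insert_of_mem hB)
                (fun h => hA (h ▸ hB)))
          _ = ℓ * 𝒮.card := by rw [Finset.sum_const, smul_eq_mul, mul_comm]
      have := hcard A (Finset.mem_insert_self A 𝒮)
      omega
    have hbu : (insert A 𝒮).biUnion id = A ∪ U := by
      rw [Finset.biUnion_insert]; rfl
    have hcards : (insert A 𝒮).card = 𝒮.card + 1 := Finset.card_insert_of_notMem hA
    have hunion : ((insert A 𝒮).biUnion id).card = (A \ U).card + U.card := by
      rw [hbu, ← Finset.card_sdiff_add_card]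
    have hch : (𝒮.card + 1).choose 2 = 𝒮.card + 𝒮.card.choose 2 := by
      rw [Nat.choose_succ_succ, Nat.choose_one_right]
    rw [hcards, hunion, hch]
    calc (𝒮.card + 1) * k = 𝒮.card * k + k := by ring
      _ ≤ (U.card + ℓ * 𝒮.card.choose 2) + ((A \ U).card + ℓ * 𝒮.card) :=
          Nat.add_le_add ih' hkey
      _ = (A \ U).card + U.card + ℓ * (𝒮.card + 𝒮.card.choose 2) := by ring

/-- The purely arithmetical core of the argument. -/
lemma real_calc {N K L δ x F : ℝ} (hδ0 : 0 < δ) (hδ1 : δ < 1) (hK : 0 < K)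
    (hL1 : 1 ≤ L) (hKN : K ≤ N) (hN1 : 1 ≤ N) (hF0 : 0 ≤ F) (hFx : F ≤ x)
    (hxF : x < F + 1) (hKx : K * x = (1 + δ) * N) (hK2 : 4 * (N * L) < δ * K ^ 2)
    (hcount : 2 * ((F + 1) * K) ≤ 2 * N + L * ((F + 1) * F)) : False := by
  have hx0 : 0 ≤ x := le_trans hF0 hFx
  have hLN : (0:ℝ) < L * N := by positivity
  have hLx : L * x < δ * K / 2 := by
    have h1 : L * x * K = L * ((1 + δ) * N) := by rw [← hKx]; ring
    have h2 : L * ((1 + δ) * N) < 2 * (L * N) := by nlinarith [mul_lt_mul_of_pos_right hδ1 hLN]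
    have h4 : L * x * K < (δ * K / 2) * K := by
      have he : (δ * K / 2) * K = δ * K ^ 2 / 2 := by ring
      rw [h1, he]; nlinarith [hK2, h2]
    exact (mul_lt_mul_iff_of_pos_right hK).1 h4
  have hLxx : L * x * x ≤ δ * K / 2 * x := mul_le_mul_of_nonneg_right (le_of_lt hLx) hx0
  have hLxx2 : δ * K / 2 * x < δ * N := by
    have he : δ * K / 2 * x = δ / 2 * (K * x) := by ring
    rw [he, hKx]
    nlinarith [mul_pos hδ0 (lt_of_lt_of_le zero_lt_one hN1)]
  have hbig : L * ((F + 1) * F) ≤ L * ((x + 1) * x) :=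
    mul_le_mul_of_nonneg_left (mul_le_mul (by linarith) hFx hF0 (by linarith)) (by linarith)
  have hxK : 2 * (x * K) < 2 * ((F + 1) * K) := by
    have := mul_lt_mul_of_pos_right hxF hK
    linarith
  have hδNK : δ * K / 2 ≤ δ * N / 2 := by
    linarith [mul_le_mul_of_nonneg_left hKN hδ0.le]
  have hδN : 0 < δ * N := mul_pos hδ0 (by linarith)
  have h5 : L * ((x + 1) * x) = L * x * x + L * x := by ring
  have h6 : 2 * (x * K) = 2 * (1 + δ) * N := by rw [mul_comm x K, hKx]; ring
  linarith [hcount, hbig, hLxx, hLxx2, hLx, hxK, hδNK, hδN, h5, h6]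

/-- If `ℓ ≥ 1`, `0 < δ < 1` and `k > 2·√(n·ℓ/δ)`, then the number of `ℓ`-good
`k`-cliques in a graph `G` on `n` vertices is at most `(1+δ)·n/k`. -/
theorem stmt_0 {n k ℓ : ℕ} (G : SimpleGraph (Fin n)) (hℓ : 1 ≤ ℓ) (δ : ℝ)
    (hδ0 : 0 < δ) (hδ1 : δ < 1)
    (hk : (k : ℝ) > 2 * Real.sqrt ((n : ℝ) * ℓ / δ)) :
    ({S : Finset (Fin n) | IsGoodClique G k ℓ S}.ncard : ℝ) ≤ (1 + δ) * n / k := by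
  classical
  have hKpos : (0:ℝ) < k := lt_of_le_of_lt (by positivity) hk
  have hk0 : 0 < k := by exact_mod_cast hKpos
  set 𝒮 : Finset (Finset (Fin n)) := Finset.univ.filter (IsGoodClique G k ℓ) with h𝒮
  have hset : {S : Finset (Fin n) | IsGoodClique G k ℓ S} = ↑𝒮 := by
    ext S; simp [h𝒮]
  rw [hset, Set.ncard_coe_finset]
  by_contra hcon
  push_neg at hcon
  set x : ℝ := (1 + δ) * n / k with hxdef
  have hx0 : 0 ≤ x := by positivity
  set f : ℕ := Nat.floor x with hf
  have hFle : (f : ℝ) ≤ x := Nat.floor_le hx0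
  have hxlt : x < (f : ℝ) + 1 := Nat.lt_floor_add_one x
  have ht₀le : f + 1 ≤ 𝒮.card := by
    have : (f : ℝ) < (𝒮.card : ℝ) := lt_of_le_of_lt hFle hcon
    exact_mod_cast Nat.add_one_le_iff.2 (by exact_mod_cast this)
  obtain ⟨𝒮', hsub, hcard'⟩ := Finset.exists_subset_card_eq ht₀le
  have hmemP : ∀ A ∈ 𝒮', IsGoodClique G k ℓ A := by
    intro A hA
    have := hsub hA
    simp [h𝒮] at this
    exact this
  have hkn : k ≤ n := by
    obtain ⟨A, hA⟩ : 𝒮'.Nonempty := Finset.card_pos.1 (by omega)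
    have := (hmemP A hA).1
    calc k = A.card := this.symm
      _ ≤ (Finset.univ : Finset (Fin n)).card := Finset.card_le_univ A
      _ = n := by simp
  have hcount := count_lemma 𝒮' (fun A hA => (hmemP A hA).1)
    (fun A hA B hB hne => good_inter_le (hmemP A hA) (hmemP B hB) hne)
  have hUn : (𝒮'.biUnion id).card ≤ n := by
    calc (𝒮'.biUnion id).card ≤ (Finset.univ : Finset (Fin n)).card := Finset.card_le_univ _
      _ = n := by simp
  rw [hcard'] at hcount
  have hcount2 : (f + 1) * k ≤ n + ℓ * (f + 1).choose 2 := le_trans hcount (by omega)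
  have hch : 2 * (f + 1).choose 2 = (f + 1) * f := by
    rw [Nat.choose_two_right]
    simp only [Nat.add_sub_cancel]
    exact Nat.two_mul_div_two_of_even (by simpa [mul_comm] using Nat.even_mul_succ_self f)
  have hcount3 : 2 * (((f:ℝ) + 1) * k) ≤ 2 * n + (ℓ:ℝ) * (((f:ℝ) + 1) * f) := by
    have h2 : 2 * ((f + 1) * k) ≤ 2 * n + ℓ * ((f + 1) * f) := by
      calc 2 * ((f + 1) * k) ≤ 2 * (n + ℓ * (f + 1).choose 2) := Nat.mul_le_mul_left 2 hcount2
        _ = 2 * n + ℓ * (2 * (f + 1).choose 2) := by ring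
        _ = 2 * n + ℓ * ((f + 1) * f) := by rw [hch]
    exact_mod_cast h2
  have hL1 : (1:ℝ) ≤ (ℓ:ℝ) := by exact_mod_cast hℓ
  have hKN : (k:ℝ) ≤ (n:ℝ) := by exact_mod_cast hkn
  have hN1 : (1:ℝ) ≤ (n:ℝ) := le_trans (by exact_mod_cast hk0) hKN
  have hKx : (k:ℝ) * x = (1 + δ) * n := by
    rw [hxdef]; field_simp
  have hK2 : 4 * ((n:ℝ) * ℓ) < δ * k ^ 2 := by
    have hnn : (0:ℝ) ≤ (n:ℝ) * ℓ / δ := by positivity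
    have h1 : (2 * Real.sqrt ((n:ℝ) * ℓ / δ)) ^ 2 < (k:ℝ) ^ 2 := by
      have hs := Real.sqrt_nonneg ((n:ℝ) * ℓ / δ)
      nlinarith [hk]
    rw [mul_pow, Real.sq_sqrt hnn] at h1
    have h3 : 2 ^ 2 * ((n:ℝ) * ℓ / δ) * δ < (k:ℝ) ^ 2 * δ := mul_lt_mul_of_pos_right h1 hδ0
    have hd : (n:ℝ) * ℓ / δ * δ = (n:ℝ) * ℓ := div_mul_cancel₀ _ (ne_of_gt hδ0)
    nlinarith [h3, hd]
  exact real_calc hδ0 hδ1 hKpos hL1 hKN hN1 (Nat.cast_nonneg f) hFle hxlt hKx hK2 hcount3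
end

section
/- Let G be a graph on n vertices and let S and S' be two distinct ℓ-good k-cliques of G. Then |S ∩ S'| ≤ ℓ. -/
/-- Two distinct `ℓ`-good `k`-cliques intersect in at most `ℓ` vertices. -/
theorem stmt_1 {n k ℓ : ℕ} (G : SimpleGraph (Fin n)) (S S' : Finset (Fin n))
    (hS : IsGoodClique G k ℓ S) (hS' : IsGoodClique G k ℓ S') (hne : S ≠ S') :
    (S ∩ S').card ≤ ℓ := by
  obtain ⟨hcard, hclique, hgood⟩ := hS
  obtain ⟨hcard', hclique', _⟩ := hS'
  apply hgood (S ∩ S') (S' \ S)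
  · exact Finset.inter_subset_left
  · intro v hv; exact (Finset.mem_sdiff.mp hv).2
  · intro u hu v hv
    have hu' := Finset.mem_inter.mp hu
    have hv' := Finset.mem_sdiff.mp hv
    have hne' : u ≠ v := fun h => hv'.2 (h ▸ hu'.1)
    exact hclique' hu'.2 hv'.1 hne'
  · rw [Nat.one_le_iff_ne_zero, Ne, Finset.card_eq_zero, Finset.sdiff_eq_empty_iff_subset]
    intro hsub
    exact hne ((Finset.eq_of_subset_of_card_le hsub (by omega)).symm)
  · rw [Finset.inter_comm, Finset.card_inter_add_card_sdiff]
    exact hcard'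
end

section
/- There exist constants c, C > 0 such that for all sufficiently large n and all k with C·log₂ n ≤ k ≤ n/2, with probability at least 0.99 over H drawn from B(k, n−k, 1/2), every biclique (L, R) of H with |R| ≥ 1 and |L| + |R| = k satisfies |L| ≤ c·log₂ n. -/
open MeasureTheory

/-- The random bipartite graph model `B(k, m, p)`: left vertex set `Fin k`, right vertex
set `Fin m`, each of the `k·m` edges present independently with probability `p`
(`true` means present). -/
noncomputable def bipartiteER (k m : ℕ) (p : ENNReal) (hp : p ≤ 1) :
    Measure (Fin k × Fin m → Bool) :=
  Measure.pi fun _ : Fin k × Fin m => (PMF.bernoulli p.toNNReal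
    (by simpa using ENNReal.toNNReal_mono ENNReal.one_ne_top hp)).toMeasure

/-- `(L, R)` is a biclique of the bipartite graph `H`. -/
def IsBiclique {k m : ℕ} (H : Fin k × Fin m → Bool) (L : Finset (Fin k))
    (R : Finset (Fin m)) : Prop :=
  ∀ u ∈ L, ∀ v ∈ R, H (u, v) = true


/-!
A union bound. A fixed pair `(L, R)` with `|L| = ℓ`, `|R| = r` is a biclique with probability
`2^(-ℓr)`, and there are at most `C(k, ℓ) C(n - k, r) ≤ n^(2r)` such pairs. When `ℓ > 4 log₂ n`,
`2^(-ℓr) ≤ n^(-4r)`, so each of the fewer than `n` values `r ≥ 1` contributes at most `n^(-2)`,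
and a biclique with a large left side exists with probability at most `1/n ≤ 0.01`.
-/

open Finset

lemma isBiclique_setOf_eq_pi {k m : ℕ} (L : Finset (Fin k)) (R : Finset (Fin m)) :
    {H : Fin k × Fin m → Bool | IsBiclique H L R}
      = Set.univ.pi fun e => if e ∈ L ×ˢ R then {true} else Set.univ := by
  ext H
  simp only [IsBiclique, Set.mem_pi, Set.mem_univ, true_implies, Prod.forall, mem_product]
  refine ⟨fun h u v => ?_, fun h u hu v hv => by simpa [hu, hv] using h u v⟩
  split_ifs with huv
  · exact h u huv.1 v huv.2
  · trivial

lemma bipartiteER_isBiclique {k m : ℕ} {p : ENNReal} (hp : p ≤ 1) (L : Finset (Fin k))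
    (R : Finset (Fin m)) :
    bipartiteER k m p hp {H | IsBiclique H L R} = p ^ (#L * #R) := by
  classical
  have hp_top : p ≠ ⊤ := ne_top_of_le_ne_top ENNReal.one_ne_top hp
  rw [isBiclique_setOf_eq_pi, bipartiteER, Measure.pi_pi]
  simp only [apply_ite, measure_univ, PMF.toMeasure_apply_singleton _ _ (measurableSet_singleton _)]
  rw [prod_ite_mem, univ_inter, prod_const, card_product]
  exact congrArg (· ^ _) ((PMF.bernoulli_apply _ true).trans (by simp [hp_top]))

lemma bipartiteER_exists_biclique_le {k m : ℕ} {p : ENNReal} (hp : p ≤ 1) (ℓ r : ℕ) :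
    bipartiteER k m p hp {H | ∃ L R, #L = ℓ ∧ #R = r ∧ IsBiclique H L R}
      ≤ k.choose ℓ * m.choose r * p ^ (ℓ * r) := by
  have hcover : {H : Fin k × Fin m → Bool | ∃ L R, #L = ℓ ∧ #R = r ∧ IsBiclique H L R}
      = ⋃ L ∈ powersetCard ℓ univ, ⋃ R ∈ powersetCard r univ, {H | IsBiclique H L R} := by
    ext H
    simp
  calc _ ≤ ∑ L ∈ powersetCard ℓ univ, ∑ R ∈ powersetCard r univ,
          bipartiteER k m p hp {H | IsBiclique H L R} := by
        rw [hcover]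
        refine (measure_biUnion_finset_le _ _).trans (sum_le_sum fun L _ => ?_)
        exact measure_biUnion_finset_le _ _
    _ = ∑ L ∈ powersetCard ℓ univ, ∑ R ∈ powersetCard r univ, p ^ (ℓ * r) := by
        refine sum_congr rfl fun L hL => sum_congr rfl fun R hR => ?_
        rw [bipartiteER_isBiclique, (mem_powersetCard.1 hL).2, (mem_powersetCard.1 hR).2]
    _ = k.choose ℓ * m.choose r * p ^ (ℓ * r) := by
        simp [mul_assoc]

lemma pow_le_two_pow_of_mul_logb_le {n a ℓ : ℕ} (hn : 0 < n) (h : a * Real.logb 2 n ≤ ℓ) :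
    n ^ a ≤ 2 ^ ℓ := by
  have hreal : (n : ℝ) ^ a ≤ 2 ^ (ℓ : ℝ) := by
    rwa [← Real.logb_le_iff_le_rpow one_lt_two (by positivity), Real.logb_pow]
  exact_mod_cast hreal

lemma sq_mul_choose_mul_choose_le_two_pow {n ℓ r m : ℕ} (hn : 0 < n) (hk : ℓ + r ≤ n)
    (hm : m ≤ n) (hr : 1 ≤ r) (hℓ : n ^ 4 ≤ 2 ^ ℓ) :
    n ^ 2 * ((ℓ + r).choose ℓ * m.choose r) ≤ 2 ^ (ℓ * r) :=
  calc n ^ 2 * ((ℓ + r).choose ℓ * m.choose r)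
      ≤ n ^ 2 * (n ^ r * n ^ r) := by
        rw [Nat.choose_symm_add]
        gcongr
        · exact (Nat.choose_le_pow _ _).trans (Nat.pow_le_pow_left hk r)
        · exact (Nat.choose_le_pow _ _).trans (Nat.pow_le_pow_left hm r)
    _ ≤ (n ^ 4) ^ r := by
        rw [← pow_add, ← pow_add, ← pow_mul]
        exact Nat.pow_le_pow_right hn (by omega)
    _ ≤ 2 ^ (ℓ * r) := by
        rw [pow_mul]
        exact Nat.pow_le_pow_left hℓ r

lemma natCast_mul_half_pow_le_inv {a b j : ℕ} (h : b * a ≤ 2 ^ j) :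
    (a : ENNReal) * (1 / 2) ^ j ≤ (b : ENNReal)⁻¹ := by
  rw [ENNReal.le_inv_iff_mul_le, one_div, ← ENNReal.inv_pow]
  calc (a : ENNReal) * (2 ^ j)⁻¹ * b = ((b * a : ℕ) : ENNReal) * (2 ^ j)⁻¹ := by
        push_cast; ring
    _ ≤ ((2 ^ j : ℕ) : ENNReal) * (2 ^ j)⁻¹ := by gcongr
    _ = 1 := by push_cast; exact ENNReal.mul_inv_cancel (by simp) (by simp)

instance isProbabilityMeasure_bipartiteER {k m : ℕ} {p : ENNReal} (hp : p ≤ 1) :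
    IsProbabilityMeasure (bipartiteER k m p hp) := by
  unfold bipartiteER
  infer_instance

lemma bipartiteER_half_exists_biclique_four_logb_lt_le {n k m : ℕ} (hkn : k < n) (hm : m ≤ n) :
    bipartiteER k m (1 / 2) (by norm_num)
        {H | ∃ L R, IsBiclique H L R ∧ 1 ≤ #R ∧ #L + #R = k ∧ 4 * Real.logb 2 n < #L}
      ≤ (n : ENNReal)⁻¹ := by
  set rs := (range (k + 1)).filter fun r => 1 ≤ r ∧ 4 * Real.logb 2 n < (k - r : ℕ)
  have hcover : {H : Fin k × Fin m → Bool |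
        ∃ L R, IsBiclique H L R ∧ 1 ≤ #R ∧ #L + #R = k ∧ 4 * Real.logb 2 n < #L}
      ⊆ ⋃ r ∈ rs, {H | ∃ L R, #L = k - r ∧ #R = r ∧ IsBiclique H L R} := by
    rintro H ⟨L, R, hLR, hR, hk, hL⟩
    have hL' : #L = k - #R := by omega
    refine Set.mem_iUnion₂.2 ⟨#R, ?_, L, R, hL', rfl, hLR⟩
    simp only [rs, mem_filter, mem_range]
    exact ⟨by omega, hR, hL' ▸ hL⟩
  have hterm : ∀ r ∈ rs,
      (k.choose (k - r) * m.choose r : ENNReal) * (1 / 2) ^ ((k - r) * r)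
        ≤ ((n ^ 2 : ℕ) : ENNReal)⁻¹ := by
    intro r hr
    simp only [rs, mem_filter, mem_range] at hr
    obtain ⟨hrk, hr1, hlog⟩ := hr
    have hpow : n ^ 4 ≤ 2 ^ (k - r) :=
      pow_le_two_pow_of_mul_logb_le (by omega) (by exact_mod_cast hlog.le)
    have := sq_mul_choose_mul_choose_le_two_pow (by omega) (by omega) hm hr1 hpow
    rw [Nat.sub_add_cancel (by omega : r ≤ k)] at this
    exact_mod_cast natCast_mul_half_pow_le_inv this
  have hn : (n : ENNReal) ≠ 0 := by exact_mod_cast (by omega : n ≠ 0)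
  calc _ ≤ ∑ r ∈ rs, bipartiteER k m (1 / 2) (by norm_num)
          {H | ∃ L R, #L = k - r ∧ #R = r ∧ IsBiclique H L R} :=
        (measure_mono hcover).trans (measure_biUnion_finset_le _ _)
    _ ≤ ∑ _r ∈ rs, ((n ^ 2 : ℕ) : ENNReal)⁻¹ :=
        sum_le_sum fun r hr => (bipartiteER_exists_biclique_le _ _ _).trans (hterm r hr)
    _ ≤ n * ((n ^ 2 : ℕ) : ENNReal)⁻¹ := by
        rw [sum_const, nsmul_eq_mul]
        gcongr
        exact_mod_cast (card_filter_le _ _).trans (by simpa using hkn)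
    _ = (n : ENNReal)⁻¹ := by
        rw [Nat.cast_pow, pow_two, ENNReal.mul_inv (.inl hn) (.inl (by simp)), ← mul_assoc,
          ENNReal.mul_inv_cancel hn (by simp), one_mul]

/-- There are constants `c, C > 0` such that for all sufficiently large `n` and all `k`
with `C·log₂ n ≤ k ≤ n/2`, with probability at least `0.99` over `H ∼ B(k, n-k, 1/2)`,
every biclique `(L, R)` of `H` with `|R| ≥ 1` and `|L| + |R| = k` satisfies
`|L| ≤ c·log₂ n`. -/
theorem stmt_2 : ∃ c C : ℝ, 0 < c ∧ 0 < C ∧ ∃ n₀ : ℕ, ∀ n ≥ n₀, ∀ k : ℕ,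
    C * Real.logb 2 n ≤ k → (k : ℝ) ≤ n / 2 →
    ENNReal.ofReal 0.99 ≤
      bipartiteER k (n - k) (1/2) (by norm_num)
        {H | ∀ (L : Finset (Fin k)) (R : Finset (Fin (n - k))),
          IsBiclique H L R → 1 ≤ R.card → L.card + R.card = k →
          (L.card : ℝ) ≤ c * Real.logb 2 n} := by
  refine ⟨4, 1, by norm_num, by norm_num, 100, fun n hn k _ hk => ?_⟩
  have hn' : (100 : ℝ) ≤ n := by exact_mod_cast hn
  have hkn : k < n := by exact_mod_cast (show (k : ℝ) < n by linarith)
  set μ := bipartiteER k (n - k) (1 / 2) (by norm_num)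
  set bad := {H | ∃ L R, IsBiclique H L R ∧ 1 ≤ #R ∧ #L + #R = k ∧ 4 * Real.logb 2 n < #L}
  have hgood : ENNReal.ofReal 0.99 ≤ 1 - (n : ENNReal)⁻¹ := by
    have hinv : (n : ENNReal)⁻¹ ≤ 1 := ENNReal.inv_le_one.2 (by exact_mod_cast (by omega : 1 ≤ n))
    rw [ENNReal.ofReal_le_iff_le_toReal (by simp), ENNReal.toReal_sub_of_le hinv (by simp),
      ENNReal.toReal_inv, ENNReal.toReal_natCast, ENNReal.toReal_one]
    have : (n : ℝ)⁻¹ ≤ 100⁻¹ := inv_anti₀ (by norm_num) hn'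
    linarith
  calc ENNReal.ofReal 0.99 ≤ 1 - (n : ENNReal)⁻¹ := hgood
    _ ≤ 1 - μ bad := tsub_le_tsub_left
        (bipartiteER_half_exists_biclique_four_logb_lt_le hkn (Nat.sub_le n k)) 1
    _ ≤ μ badᶜ := by
        rw [tsub_le_iff_left, ← measure_univ (μ := μ)]
        exact measure_univ_le_add_compl bad
    _ = _ := by
        congr 1
        ext H
        simp [bad]
end

section
/- Let G be a graph on n ≥ 1 vertices and let A be the real symmetric n×n matrix with A(i,i) = 0 for all i, A(i,j) = 1 if {i,j} is an edge of G, and A(i,j) = −1 if i ≠ j and {i,j} is not an edge. Then the clique number ω(G) satisfies ω(G) ≤ 1 + ‖A‖₂. -/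
/-- The spectral norm (largest singular value) of a real rectangular matrix, i.e. its
operator norm as a linear map between Euclidean spaces. -/
noncomputable def specNorm {a b : ℕ} (M : Matrix (Fin a) (Fin b) ℝ) : ℝ :=
  ‖LinearMap.toContinuousLinearMap (Matrix.toEuclideanLin M)‖

/-- The clique number of `G`: the largest size of a set of pairwise adjacent vertices. -/
noncomputable def cliqueNumber {n : ℕ} (G : SimpleGraph (Fin n)) : ℕ :=
  sSup {k | ∃ S : Finset (Fin n), G.IsNClique k S}

/-- If `A` is the `±1` adjacency matrix of a graph `G` on `n ≥ 1` vertices (with zero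
diagonal, `1` at edges and `-1` at non-edges), then `ω(G) ≤ 1 + ‖A‖₂`. -/
theorem stmt_3 {n : ℕ} (hn : 1 ≤ n) (G : SimpleGraph (Fin n))
    (A : Matrix (Fin n) (Fin n) ℝ)
    (hdiag : ∀ i, A i i = 0)
    (hone : ∀ i j, i ≠ j → G.Adj i j → A i j = 1)
    (hmone : ∀ i j, i ≠ j → ¬ G.Adj i j → A i j = -1) :
    (cliqueNumber G : ℝ) ≤ 1 + specNorm A := by
  set T := LinearMap.toContinuousLinearMap (Matrix.toEuclideanLin A) with hT
  have hspec : specNorm A = ‖T‖ := rfl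
  have hTnn : 0 ≤ ‖T‖ := norm_nonneg _
  have hne : (0:ℕ) ∈ {k | ∃ S : Finset (Fin n), G.IsNClique k S} :=
    ⟨∅, by simp [SimpleGraph.isNClique_empty]⟩
  have hbdd : BddAbove {k | ∃ S : Finset (Fin n), G.IsNClique k S} := by
    refine ⟨n, fun k ⟨S, hS⟩ => ?_⟩
    rw [← hS.2]
    simpa using S.card_le_univ.trans_eq (by simp)
  obtain ⟨S, hS⟩ := Nat.sSup_mem ⟨0, hne⟩ hbdd
  set k := cliqueNumber G with hk
  have hS : G.IsNClique k S := hS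
  rcases Nat.eq_zero_or_pos k with h0 | hpos
  · rw [hspec, h0]; push_cast; linarith
  set x : EuclideanSpace ℝ (Fin n) :=
    (WithLp.equiv 2 _).symm (fun i => if i ∈ S then (1:ℝ) else 0) with hx
  have hxi : ∀ i, x i = if i ∈ S then (1:ℝ) else 0 := fun i => rfl
  have hnorm2 : ‖x‖ ^ 2 = (k:ℝ) := by
    rw [← real_inner_self_eq_norm_sq, PiLp.inner_apply]
    simp only [RCLike.inner_apply, starRingEnd_apply, star_trivial, hxi, ite_mul, one_mul,
      zero_mul, if_pos, Finset.sum_ite_mem, Finset.univ_inter]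
    simp [hS.2]
  have hsum : ∑ i ∈ S, ∑ j ∈ S, A i j = (k:ℝ) * ((k:ℝ) - 1) := by
    have hrow : ∀ i ∈ S, ∑ j ∈ S, A i j = (k:ℝ) - 1 := by
      intro i hi
      rw [← Finset.add_sum_erase S _ hi, hdiag, zero_add]
      have : ∀ j ∈ S.erase i, A i j = 1 := by
        intro j hj
        obtain ⟨hjne, hjS⟩ := Finset.mem_erase.mp hj
        exact hone i j hjne.symm (hS.1 hi hjS hjne.symm)
      rw [Finset.sum_congr rfl this, Finset.sum_const, Finset.card_erase_of_mem hi, hS.2]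
      have h1 : (1:ℕ) ≤ k := hpos
      rw [nsmul_eq_mul, Nat.cast_sub h1]
      push_cast
      ring
    rw [Finset.sum_congr rfl hrow, Finset.sum_const, hS.2]
    push_cast
    ring
  have hinner : (inner ℝ x (T x) : ℝ) = (k:ℝ) * ((k:ℝ) - 1) := by
    have hTx : T x = (WithLp.equiv 2 (Fin n → ℝ)).symm
        (A.mulVec ((WithLp.equiv 2 (Fin n → ℝ)) x)) := by
      simp [hT, Matrix.toEuclideanLin_apply]
    rw [hTx, PiLp.inner_apply]
    simp only [RCLike.inner_apply, starRingEnd_apply, star_trivial]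
    have happ : ∀ i, ((WithLp.equiv 2 (Fin n → ℝ)).symm
        (A.mulVec ((WithLp.equiv 2 (Fin n → ℝ)) x))) i = ∑ j, A i j * x j := fun i => rfl
    rw [← hsum]
    simp only [happ, hxi, ite_mul, one_mul, zero_mul, mul_ite, mul_one, mul_zero,
      Finset.sum_ite_mem, Finset.univ_inter]
  have key : (k:ℝ) * ((k:ℝ) - 1) ≤ ‖T‖ * (k:ℝ) := by
    calc (k:ℝ) * ((k:ℝ) - 1) = inner ℝ x (T x) := hinner.symm
    _ ≤ ‖x‖ * ‖T x‖ := real_inner_le_norm _ _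
    _ ≤ ‖x‖ * (‖T‖ * ‖x‖) := mul_le_mul_of_nonneg_left (T.le_opNorm x) (norm_nonneg x)
    _ = ‖T‖ * ‖x‖ ^ 2 := by ring
    _ = ‖T‖ * k := by rw [hnorm2]
  have hkpos : (0:ℝ) < k := by exact_mod_cast hpos
  rw [hspec]
  nlinarith
end

section
/- There exists a constant C > 0 such that for all integers k, m, r with k ≥ 2, m ≥ 2 and 1 ≤ r ≤ k, with probability at least 0.99 over H drawn from B(k, m, 1/2): (1) H has r-fold balancedness C·√(r·m·log k), and (2) every right vertex of H has degree at most k/2 + C·√(k·log m). -/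
/-!
Under `B(k, m, 1/2)` all graphs are equally likely, so probabilities are proportions. For
nonempty `S` the entries `u_S(j)`, `j ∈ V`, are independent fair signs, being products of
disjoint sets of independent fair signs; likewise `2 deg v - k` is a sum of `k` independent fair
signs. Both sums therefore have the moment generating function `cosh λ ^ n` of a sum of `n`
Rademacher variables, and the Chernoff bound with `cosh λ ≤ exp (λ² / 2)` gives tails
`2 exp (-t² / 2n)`. With `C = 6`, a union bound over the fewer than `k ^ (r + 1)` sets `S` and
the `m` right vertices leaves a failure probability of at most `1/100`.
-/

open MeasureTheory

/-- `H` has `r`-fold balancedness `Δ`: for every nonempty `S ⊆ U` with `|S| ≤ r`,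
the vector `u_S(j) = ∏_{i ∈ S} H(i,j)` (with `±1` entries) satisfies
`|∑_j u_S(j)| ≤ Δ`. -/
def FoldBalanced {k m : ℕ} (H : Fin k → Fin m → Bool) (r : ℕ) (Δ : ℝ) : Prop :=
  ∀ S : Finset (Fin k), S.Nonempty → S.card ≤ r →
    |∑ j : Fin m, ∏ i ∈ S, (if H i j then (1 : ℝ) else -1)| ≤ Δ

open Real Finset ProbabilityTheory

section Rademacher

variable {Ω : Type*} [Fintype Ω]

/-- Under the uniform distribution on `Ω`, `X` has the moment generating function of a sum of
`n` independent Rademacher variables. -/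
def HasRademacherMGF (X : Ω → ℝ) (n : ℕ) : Prop :=
  ∀ l : ℝ, ∑ ω, exp (l * X ω) = Fintype.card Ω * cosh l ^ n

namespace HasRademacherMGF

variable {X : Ω → ℝ} {n : ℕ}

lemma neg (h : HasRademacherMGF X n) : HasRademacherMGF (fun ω => -X ω) n := fun l => by
  simpa only [mul_neg, neg_mul, cosh_neg] using h (-l)

lemma comp_equiv {Ω' : Type*} [Fintype Ω'] (h : HasRademacherMGF X n) (e : Ω' ≃ Ω) :
    HasRademacherMGF (X ∘ e) n := fun l => by
  rw [Fintype.card_congr e, ← h l]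
  exact e.sum_comp fun ω => exp (l * X ω)

lemma card_lt_le (h : HasRademacherMGF X n) (hn : 0 < n) {t : ℝ} (ht : 0 ≤ t) :
    (#{ω | t < X ω} : ℝ) ≤ Fintype.card Ω * exp (-(t ^ 2 / (2 * n))) := by
  have hn' : (0 : ℝ) < n := by exact_mod_cast hn
  -- `l = t / n` minimises the Chernoff exponent `n l² / 2 - l t`
  set l := t / n with hl_def
  have hl : 0 ≤ l := div_nonneg ht hn'.le
  have markov : (#{ω | t < X ω} : ℝ) * exp (l * t) ≤ ∑ ω, exp (l * X ω) := by
    rw [← nsmul_eq_mul]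
    refine (card_nsmul_le_sum _ _ _ fun ω hω => ?_).trans
      (sum_le_sum_of_subset_of_nonneg (filter_subset _ _) fun _ _ _ => (exp_pos _).le)
    exact exp_le_exp.2 (mul_le_mul_of_nonneg_left (mem_filter.1 hω).2.le hl)
  have hcosh : cosh l ^ n ≤ exp (n * (l ^ 2 / 2)) := by
    rw [exp_nat_mul]
    exact pow_le_pow_left₀ (cosh_pos l).le (cosh_le_exp_half_sq l) n
  have hexponent : n * (l ^ 2 / 2) - l * t = -(t ^ 2 / (2 * n)) := by
    rw [hl_def]
    field_simp
    ring
  rw [← hexponent, exp_sub, mul_div_assoc', le_div_iff₀ (exp_pos _)]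
  calc _ ≤ ∑ ω, exp (l * X ω) := markov
    _ ≤ _ := by
      rw [h l]
      gcongr

variable [MeasurableSpace Ω] [MeasurableSingletonClass Ω]

lemma uniformOn_real_lt_le (h : HasRademacherMGF X n) (hn : 0 < n) {t : ℝ} (ht : 0 ≤ t) :
    (uniformOn Set.univ).real {ω | t < X ω} ≤ exp (-(t ^ 2 / (2 * n))) := by
  rw [← coe_filter_univ, measureReal_def, uniformOn_univ, Measure.count_apply_finset,
    ENNReal.toReal_div]
  exact div_le_of_le_mul₀ (by positivity) (by positivity) <| by
    rw [mul_comm]; exact h.card_lt_le hn ht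

lemma uniformOn_real_lt_abs_le (h : HasRademacherMGF X n) (hn : 0 < n) {t : ℝ} (ht : 0 ≤ t) :
    (uniformOn Set.univ).real {ω | t < |X ω|} ≤ 2 * exp (-(t ^ 2 / (2 * n))) := by
  have hsplit : {ω | t < |X ω|} = {ω | t < X ω} ∪ {ω | t < -X ω} := by
    ext ω
    exact lt_abs (a := t) (b := X ω)
  rw [hsplit, two_mul]
  exact (measureReal_union_le _ _).trans
    (add_le_add (h.uniformOn_real_lt_le hn ht) (h.neg.uniformOn_real_lt_le hn ht))

end HasRademacherMGF

lemma exp_mul_eq_cosh_add_sinh_mul {x : ℝ} (hx : x = 1 ∨ x = -1) (l : ℝ) :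
    exp (l * x) = cosh l + sinh l * x := by
  rcases hx with rfl | rfl
  · simp [cosh_add_sinh]
  · simp [cosh_sub_sinh, ← sub_eq_add_neg]

lemma hasRademacherMGF_sum_comp {ι β : Type*} [Fintype ι] [DecidableEq ι] [Fintype β]
    {g : β → ℝ} (hg : ∀ b, g b = 1 ∨ g b = -1) (hg₀ : ∑ b, g b = 0) :
    HasRademacherMGF (fun ω : ι → β => ∑ j, g (ω j)) (Fintype.card ι) := fun l => by
  have hcoord : ∑ b, exp (l * g b) = Fintype.card β * cosh l := by
    simp [exp_mul_eq_cosh_add_sinh_mul (hg _), sum_add_distrib, ← mul_sum, hg₀]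
  calc ∑ ω : ι → β, exp (l * ∑ j, g (ω j)) = ∑ ω : ι → β, ∏ j, exp (l * g (ω j)) := by
        simp only [mul_sum, exp_sum]
    _ = ∏ _j : ι, ∑ b, exp (l * g b) := (Fintype.prod_sum fun _ b => exp (l * g b)).symm
    _ = _ := by
        rw [hcoord, prod_const, card_univ, mul_pow, Fintype.card_fun]
        push_cast
        rfl

end Rademacher

lemma exp_neg_natCast_mul_log {x : ℝ} (hx : 0 < x) (n : ℕ) : exp (-(n * log x)) = (x ^ n)⁻¹ := by
  rw [exp_neg, exp_nat_mul, exp_log hx]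

lemma card_filter_card_le_lt_pow {α : Type*} [Fintype α] [DecidableEq α]
    (hα : 2 ≤ Fintype.card α) (r : ℕ) :
    #{S : Finset α | S.card ≤ r} < Fintype.card α ^ (r + 1) :=
  calc #{S : Finset α | S.card ≤ r}
      ≤ #((range (r + 1)).biUnion fun i => powersetCard i (univ : Finset α)) :=
        card_le_card fun S hS => by
          simp only [mem_filter, mem_biUnion, mem_range, mem_powersetCard] at hS ⊢
          exact ⟨S.card, Nat.lt_succ_of_le hS.2, subset_univ S, rfl⟩
    _ ≤ ∑ i ∈ range (r + 1), #(powersetCard i (univ : Finset α)) := card_biUnion_le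
    _ ≤ ∑ i ∈ range (r + 1), Fintype.card α ^ i := sum_le_sum fun i _ => by
        rw [card_powersetCard, card_univ]
        exact Nat.choose_le_pow _ _
    _ < Fintype.card α ^ (r + 1) := Nat.geomSum_lt hα fun i hi => mem_range.1 hi

section BoolSign

variable {α : Type*}

def boolSign (b : Bool) : ℝ := if b then 1 else -1

lemma boolSign_eq_one_or (b : Bool) : boolSign b = 1 ∨ boolSign b = -1 := by
  cases b <;> simp [boolSign]

lemma prod_boolSign_eq_one_or (s : Finset α) (c : α → Bool) :
    ∏ i ∈ s, boolSign (c i) = 1 ∨ ∏ i ∈ s, boolSign (c i) = -1 :=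
  prod_induction _ (fun x => x = 1 ∨ x = -1)
    (by rintro _ _ (rfl | rfl) (rfl | rfl) <;> norm_num) (Or.inl rfl)
    fun i _ => boolSign_eq_one_or (c i)

variable [Fintype α]

lemma sum_prod_boolSign_eq_zero [DecidableEq α] {S : Finset α} (hS : S.Nonempty) :
    ∑ c : α → Bool, ∏ i ∈ S, boolSign (c i) = 0 := by
  obtain ⟨i₀, hi₀⟩ := hS
  simp_rw [← Fintype.prod_ite_mem S]
  -- once the product is expanded over all coordinates, its factor at `i₀` is `∑ b, boolSign b = 0`
  rw [← Fintype.prod_sum fun i b => if i ∈ S then boolSign b else 1]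
  exact prod_eq_zero (mem_univ i₀) (by simp [hi₀, boolSign])

lemma sum_boolSign_eq (f : α → Bool) :
    ∑ a, boolSign (f a) = 2 * #{a | f a = true} - Fintype.card α := by
  have h : ∀ a, boolSign (f a) = 2 * (if f a = true then 1 else 0) - 1 := fun a => by
    cases f a <;> norm_num [boolSign]
  rw [sum_congr rfl fun a _ => h a, sum_sub_distrib, ← mul_sum, sum_boole]
  simp

end BoolSign

section Bipartite

variable {k m : ℕ}

lemma bipartiteER_half_eq_uniformOn :
    bipartiteER k m (1 / 2) (by norm_num) = uniformOn Set.univ := by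
  refine Measure.ext_iff_singleton.2 fun H => ?_
  rw [uniformOn_univ, Measure.count_singleton, ← Set.univ_pi_singleton H, bipartiteER,
    Measure.pi_pi]
  rw [Fintype.prod_congr _ (fun _ => 2⁻¹) fun p => ?_]
  · simp [ENNReal.inv_pow]
  rw [PMF.toMeasure_apply_singleton _ _ (measurableSet_singleton _)]
  cases H p <;> simp [PMF.bernoulli_apply, ENNReal.toNNReal_ofNat, ENNReal.one_sub_inv_two]

instance (p : ENNReal) (hp : p ≤ 1) : IsProbabilityMeasure (bipartiteER k m p hp) := by
  unfold bipartiteER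
  infer_instance

lemma hasRademacherMGF_balance {S : Finset (Fin k)} (hS : S.Nonempty) :
    HasRademacherMGF (fun H : Fin k × Fin m → Bool => ∑ j, ∏ i ∈ S, boolSign (H (i, j))) m := by
  have h := (hasRademacherMGF_sum_comp (ι := Fin m) (prod_boolSign_eq_one_or S)
    (sum_prod_boolSign_eq_zero hS)).comp_equiv
      ((Equiv.arrowCongr (Equiv.prodComm _ _) (Equiv.refl Bool)).trans (Equiv.curry _ _ _))
  rw [Fintype.card_fin] at h
  exact h

lemma hasRademacherMGF_degree (v : Fin m) :
    HasRademacherMGF (fun H : Fin k × Fin m → Bool => ∑ i, boolSign (H (i, v))) k := by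
  have hg₀ : ∑ c : Fin m → Bool, boolSign (c v) = 0 := by
    simpa using sum_prod_boolSign_eq_zero (singleton_nonempty v)
  have h := (hasRademacherMGF_sum_comp (ι := Fin k)
    (fun c : Fin m → Bool => boolSign_eq_one_or (c v)) hg₀).comp_equiv (Equiv.curry _ _ _)
  rw [Fintype.card_fin] at h
  exact h

lemma bipartiteER_half_real_abs_balance_gt_le (hm : 0 < m) {S : Finset (Fin k)}
    (hS : S.Nonempty) {t : ℝ} (ht : 0 ≤ t) :
    (bipartiteER k m (1 / 2) (by norm_num)).real
        {H | t < |∑ j, ∏ i ∈ S, boolSign (H (i, j))|} ≤ 2 * exp (-(t ^ 2 / (2 * m))) := by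
  rw [bipartiteER_half_eq_uniformOn]
  exact (hasRademacherMGF_balance hS).uniformOn_real_lt_abs_le hm ht

lemma bipartiteER_half_real_degree_gt_le (hk : 0 < k) (v : Fin m) {s : ℝ} (hs : 0 ≤ s) :
    (bipartiteER k m (1 / 2) (by norm_num)).real
        {H | k / 2 + s < #{u | H (u, v) = true}} ≤ exp (-(2 * s ^ 2 / k)) := by
  have hevent : {H : Fin k × Fin m → Bool | k / 2 + s < #{u | H (u, v) = true}}
      = {H | 2 * s < ∑ i, boolSign (H (i, v))} := by
    ext H
    simp only [Set.mem_ofPred_eq, sum_boolSign_eq fun i => H (i, v), Fintype.card_fin]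
    constructor <;> intro <;> linarith
  rw [hevent, bipartiteER_half_eq_uniformOn]
  convert (hasRademacherMGF_degree v).uniformOn_real_lt_le hk (by positivity : 0 ≤ 2 * s)
    using 3
  ring

lemma bipartiteER_half_real_not_foldBalanced_le (hk : 2 ≤ k) (hm : 0 < m) {r : ℕ} (hr : 1 ≤ r) :
    (bipartiteER k m (1 / 2) (by norm_num)).real
        {H | ¬FoldBalanced (fun i j => H (i, j)) r (6 * √(r * m * log k))} ≤ 1 / 200 := by
  set t := 6 * √(r * m * log k)
  set 𝒮 : Finset (Finset (Fin k)) := {S | S.Nonempty ∧ S.card ≤ r}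
  have hk₀ : (0 : ℝ) < k := by positivity
  have hevent : {H : Fin k × Fin m → Bool | ¬FoldBalanced (fun i j => H (i, j)) r t}
      = ⋃ S ∈ 𝒮, {H | t < |∑ j, ∏ i ∈ S, boolSign (H (i, j))|} := by
    ext H
    simp [FoldBalanced, boolSign, 𝒮, and_assoc]
  have hexponent : t ^ 2 / (2 * m) = (18 * r : ℕ) * log k := by
    have : (0 : ℝ) ≤ r * m * log k := by
      have := log_nonneg (one_le_two.trans (Nat.ofNat_le_cast.2 hk)); positivity
    rw [mul_pow, sq_sqrt this]
    field_simp
    push_cast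
    ring
  have hcard : (#𝒮 : ℝ) ≤ k ^ (r + 1) := by
    have hsub : 𝒮 ⊆ univ.filter fun S => S.card ≤ r := fun S hS =>
      mem_filter.2 ⟨mem_univ S, (mem_filter.1 hS).2.2⟩
    have := (card_le_card hsub).trans
      (card_filter_card_le_lt_pow (α := Fin k) (by simpa using hk) r).le
    rw [Fintype.card_fin] at this
    exact_mod_cast this
  have hpow : (k : ℝ) ^ (r + 1) * 400 ≤ k ^ (18 * r) :=
    calc (k : ℝ) ^ (r + 1) * 400 ≤ k ^ (r + 1) * k ^ (17 * r - 1) := by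
          gcongr
          calc (400 : ℝ) ≤ 2 ^ 16 := by norm_num
            _ ≤ 2 ^ (17 * r - 1) := pow_le_pow_right₀ one_le_two (by omega)
            _ ≤ k ^ (17 * r - 1) := by gcongr; exact_mod_cast hk
      _ = k ^ (18 * r) := by rw [← pow_add]; congr 1; omega
  rw [hevent]
  calc _ ≤ ∑ S ∈ 𝒮, 2 * exp (-(t ^ 2 / (2 * m))) :=
        (measureReal_biUnion_finset_le _ _).trans <| sum_le_sum fun S hS =>
          bipartiteER_half_real_abs_balance_gt_le hm (mem_filter.1 hS).2.1 (by positivity)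
    _ ≤ k ^ (r + 1) * (2 * ((k : ℝ) ^ (18 * r))⁻¹) := by
        rw [sum_const, nsmul_eq_mul, hexponent, exp_neg_natCast_mul_log hk₀]
        gcongr
    _ ≤ 1 / 200 := by
        rw [← div_eq_mul_inv, mul_div_assoc', div_le_iff₀ (by positivity)]
        linarith

lemma bipartiteER_half_real_exists_degree_gt_le (hk : 0 < k) (hm : 2 ≤ m) :
    (bipartiteER k m (1 / 2) (by norm_num)).real
        {H | ∃ v, k / 2 + 6 * √(k * log m) < #{u | H (u, v) = true}} ≤ 1 / 200 := by
  set s := 6 * √(k * log m)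
  have hm₀ : (0 : ℝ) < m := by positivity
  have hevent : {H : Fin k × Fin m → Bool | ∃ v, k / 2 + s < #{u | H (u, v) = true}}
      = ⋃ v ∈ (univ : Finset (Fin m)), {H | k / 2 + s < #{u | H (u, v) = true}} := by
    ext H
    simp
  have hexponent : 2 * s ^ 2 / k = (72 : ℕ) * log m := by
    have : (0 : ℝ) ≤ k * log m := by
      have := log_nonneg (one_le_two.trans (Nat.ofNat_le_cast.2 hm)); positivity
    rw [mul_pow, sq_sqrt this]
    field_simp
    push_cast
    ring
  rw [hevent]
  calc _ ≤ ∑ _v : Fin m, exp (-(2 * s ^ 2 / k)) :=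
        (measureReal_biUnion_finset_le _ _).trans <| sum_le_sum fun v _ =>
          bipartiteER_half_real_degree_gt_le hk v (by positivity)
    _ = ((m : ℝ) ^ 71)⁻¹ := by
        rw [sum_const, card_univ, Fintype.card_fin, nsmul_eq_mul, hexponent,
          exp_neg_natCast_mul_log hm₀, pow_succ' _ 71, mul_inv, mul_inv_cancel_left₀ hm₀.ne']
    _ ≤ 1 / 200 := by
        rw [inv_eq_one_div]
        gcongr
        calc (200 : ℝ) ≤ 2 ^ 71 := by norm_num
          _ ≤ m ^ 71 := by gcongr; exact_mod_cast hm

end Bipartite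

/-- There is a constant `C > 0` such that for all `k, m ≥ 2` and `1 ≤ r ≤ k`, with
probability at least `0.99` over `H ∼ B(k, m, 1/2)`: (1) `H` has `r`-fold balancedness
`C·√(r·m·log k)`, and (2) every right vertex of `H` has degree at most
`k/2 + C·√(k·log m)`. -/
theorem stmt_7 : ∃ C : ℝ, 0 < C ∧ ∀ k m r : ℕ, 2 ≤ k → 2 ≤ m → 1 ≤ r → r ≤ k →
    ENNReal.ofReal 0.99 ≤
      bipartiteER k m (1/2) (by norm_num)
        {H | FoldBalanced (fun i j => H (i, j)) r
              (C * Real.sqrt ((r : ℝ) * m * Real.log k)) ∧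
          ∀ v : Fin m, ((Finset.univ.filter fun u : Fin k => H (u, v) = true).card : ℝ)
            ≤ (k : ℝ) / 2 + C * Real.sqrt ((k : ℝ) * Real.log m)} := by
  refine ⟨6, by norm_num, fun k m r hk hm hr _ => ENNReal.ofReal_le_of_le_toReal ?_⟩
  set μ := bipartiteER k m (1 / 2) (by norm_num)
  set G := {H : Fin k × Fin m → Bool |
    FoldBalanced (fun i j => H (i, j)) r (6 * √(r * m * log k)) ∧
    ∀ v : Fin m, (#{u | H (u, v) = true} : ℝ) ≤ k / 2 + 6 * √(k * log m)}
  have hcompl : Gᶜ = {H | ¬FoldBalanced (fun i j => H (i, j)) r (6 * √(r * m * log k))} ∪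
      {H | ∃ v, k / 2 + 6 * √(k * log m) < #{u | H (u, v) = true}} := by
    ext H
    simp only [G, Set.mem_compl_iff, Set.mem_ofPred_eq, Set.mem_union, not_and_or, not_forall,
      not_le]
  have hfail : μ.real Gᶜ ≤ 1 / 200 + 1 / 200 := by
    rw [hcompl]
    exact (measureReal_union_le _ _).trans (add_le_add
      (bipartiteER_half_real_not_foldBalanced_le hk (by omega) hr)
      (bipartiteER_half_real_exists_degree_gt_le (by omega) hm))
  rw [probReal_compl_eq_one_sub (Set.toFinite G).measurableSet] at hfail
  change (0.99 : ℝ) ≤ μ.real G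
  linarith
end

section
/- Let S₁, …, S_m be subsets of [n] with |S_i| = k ≥ 1 for every i and |S_i ∩ S_j| ≤ Δ for all i ≠ j. If k ≥ √(2nΔ), then m ≤ (n/k)·(1 + 2nΔ/k²). -/
/-- If `S₁, …, S_m ⊆ [n]` all have size `k ≥ 1` and pairwise intersections of size at
most `Δ`, and `k ≥ √(2nΔ)`, then `m ≤ (n/k)·(1 + 2nΔ/k²)`. -/
theorem stmt_16 {n m k Δ : ℕ} (hk : 1 ≤ k) (S : Fin m → Finset (Fin n))
    (hcard : ∀ i, (S i).card = k)
    (hint : ∀ i j, i ≠ j → (S i ∩ S j).card ≤ Δ)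
    (hksqrt : (k : ℝ) ≥ Real.sqrt (2 * (n : ℝ) * Δ)) :
    (m : ℝ) ≤ ((n : ℝ) / k) * (1 + 2 * (n : ℝ) * Δ / (k : ℝ) ^ 2) := by
  have hK : (0:ℝ) < k := by exact_mod_cast hk
  have hD : (0:ℝ) ≤ Δ := Nat.cast_nonneg _
  have hN : (0:ℝ) ≤ n := Nat.cast_nonneg _
  have hk2 : 2 * (n:ℝ) * Δ ≤ (k:ℝ)^2 := by
    have h0 : (0:ℝ) ≤ 2 * n * Δ := by positivity
    nlinarith [Real.sq_sqrt h0, Real.sqrt_nonneg (2*(n:ℝ)*Δ)]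
  rcases Nat.eq_zero_or_pos m with hm | hm
  · rw [hm]; push_cast; positivity
  · have hmR : (1:ℝ) ≤ m := by exact_mod_cast hm
    -- degree function
    set d : Fin n → ℕ := fun x => (Finset.univ.filter fun i => x ∈ S i).card with hd
    have hdx : ∀ x, d x = ∑ i : Fin m, if x ∈ S i then 1 else 0 := by
      intro x; exact Finset.card_filter _ _
    have hsum : ∑ x : Fin n, d x = m * k := by
      simp_rw [hdx]
      rw [Finset.sum_comm]
      have h1 : ∀ i : Fin m, (∑ x : Fin n, if x ∈ S i then 1 else 0) = k := by
        intro i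
        rw [Finset.sum_ite_mem, Finset.univ_inter, Finset.sum_const, smul_eq_mul,
          mul_one, hcard]
      simp_rw [h1, Finset.sum_const, Finset.card_univ, Fintype.card_fin, smul_eq_mul]
    have hsq : ∑ x : Fin n, d x ^ 2 = ∑ i : Fin m, ∑ j : Fin m, (S i ∩ S j).card := by
      have h2 : ∀ x, d x ^ 2 = ∑ i : Fin m, ∑ j : Fin m,
          if x ∈ S i ∩ S j then 1 else 0 := by
        intro x
        rw [sq, hdx, Finset.sum_mul_sum]
        congr 1; ext i; congr 1; ext j
        by_cases h1 : x ∈ S i <;> by_cases h2 : x ∈ S j <;>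
          simp [h1, h2, Finset.mem_inter]
      simp_rw [h2]
      rw [Finset.sum_comm]
      congr 1; ext i
      rw [Finset.sum_comm]
      congr 1; ext j
      rw [Finset.sum_ite_mem, Finset.univ_inter, Finset.sum_const, smul_eq_mul, mul_one]
    have hbound : ∑ i : Fin m, ∑ j : Fin m, (S i ∩ S j).card ≤ m * k + m * (m * Δ) := by
      have h3 : ∀ i : Fin m, (∑ j : Fin m, (S i ∩ S j).card) ≤ k + m * Δ := by
        intro i
        rw [← Finset.add_sum_erase _ _ (Finset.mem_univ i)]
        have h4 : (S i ∩ S i).card = k := by rw [Finset.inter_self, hcard]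
        have h5 : ∑ j ∈ Finset.univ.erase i, (S i ∩ S j).card ≤ m * Δ := by
          calc ∑ j ∈ Finset.univ.erase i, (S i ∩ S j).card
              ≤ (Finset.univ.erase i).card • Δ := by
                apply Finset.sum_le_card_nsmul
                intro j hj
                exact hint i j (Ne.symm (Finset.ne_of_mem_erase hj))
            _ ≤ m * Δ := by
                rw [smul_eq_mul]
                exact Nat.mul_le_mul_right _ (le_trans (Finset.card_erase_le)
                  (by simp))
        omega
      calc ∑ i : Fin m, ∑ j : Fin m, (S i ∩ S j).card
          ≤ ∑ _i : Fin m, (k + m * Δ) := Finset.sum_le_sum (fun i _ => h3 i)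
        _ = m * (k + m * Δ) := by simp [mul_comm]
        _ = m * k + m * (m * Δ) := by ring
    -- Cauchy–Schwarz in ℝ
    have hCS : ((m:ℝ) * k) ^ 2 ≤ (n:ℝ) * ((m:ℝ) * k + (m:ℝ) * ((m:ℝ) * Δ)) := by
      have := sq_sum_le_card_mul_sum_sq (s := (Finset.univ : Finset (Fin n)))
        (f := fun x => (d x : ℝ))
      have e1 : (∑ x : Fin n, (d x : ℝ)) = (m:ℝ) * k := by
        rw [← Nat.cast_sum _ d, hsum]; push_cast; ring
      have e2 : (∑ x : Fin n, (d x : ℝ) ^ 2) ≤ (m:ℝ) * k + (m:ℝ) * ((m:ℝ) * Δ) := by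
        have : (∑ x : Fin n, (d x : ℝ) ^ 2) = ((∑ x : Fin n, d x ^ 2 : ℕ) : ℝ) := by
          push_cast; ring
        rw [this, hsq]
        calc ((∑ i : Fin m, ∑ j : Fin m, (S i ∩ S j).card : ℕ) : ℝ)
            ≤ ((m * k + m * (m * Δ) : ℕ) : ℝ) := by exact_mod_cast hbound
          _ = (m:ℝ) * k + (m:ℝ) * ((m:ℝ) * Δ) := by push_cast; ring
      simp only [Finset.card_univ, Fintype.card_fin] at this
      calc ((m:ℝ) * k) ^ 2 = (∑ x : Fin n, (d x : ℝ)) ^ 2 := by rw [e1]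
        _ ≤ (n:ℝ) * ∑ x : Fin n, (d x : ℝ) ^ 2 := this
        _ ≤ (n:ℝ) * ((m:ℝ) * k + (m:ℝ) * ((m:ℝ) * Δ)) := by
            apply mul_le_mul_of_nonneg_left e2 hN
    -- arithmetic
    have hmR0 : (0:ℝ) < m := by linarith
    have h1 : (m:ℝ) * k^2 ≤ n * k + (m:ℝ) * n * Δ := by
      have := hCS
      nlinarith [hCS, hmR0]
    have hmk : (m:ℝ) * k ≤ 2 * n := by
      nlinarith [h1, hk2, mul_pos hmR0 hK]
    have hgoal : (m:ℝ) * k^3 ≤ n * k^2 + 2 * n^2 * Δ := by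
      nlinarith [h1, hmk, hK, hD, hN, mul_nonneg hN hD]
    have hrhs : ((n:ℝ) / k) * (1 + 2 * (n:ℝ) * Δ / (k:ℝ)^2)
        = ((n:ℝ) * k^2 + 2 * (n:ℝ)^2 * Δ) / (k:ℝ)^3 := by
      field_simp
    rw [hrhs, le_div_iff₀ (by positivity)]
    linarith [hgoal]
end

section
/- Let n, k be integers with 2 ≤ k ≤ n, let 0 < p < 1, and fix S* ⊆ [n] with |S*| = k. Let G be the random graph on vertex set [n] in which every pair of vertices inside S* is an edge and every other pair of vertices is an edge independently with probability p. Then with probability at least 1 − k/n², every clique S of G with |S| ≥ k and S ≠ S* satisfies |S ∩ S*| ≤ 3·(log n)/(log(1/p)). -/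
/-!
Fix `t = 3 log n / log (1/p)`, so that `p ^ m ≤ n⁻³` for every integer `m > t`. If a clique
`S ≠ S*` with `|S| ≥ k = |S*|` meets `S*` in at least `m` vertices, then with
`b = max 1 (k - |S ∩ S*|)` it contains `b` vertices outside `S*` all joined to a set of
`max m (k - b)` vertices of `S*`. For each `b` there are at most `k ^ b (n - k) ^ b` such pairs of
sets, each complete with probability at most `(p ^ m) ^ b ≤ n^{-3b}`, so the union bound is a
geometric series in `x = k (n - k) / n³`, and `x / (1 - x) ≤ k / n²`.
-/

open MeasureTheory Finset
open scoped ENNReal NNReal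

set_option linter.deprecated false

/-- Given a planted set `Sstar`, the edge set of the semi-random graph determined by a
sample `ω` of the edge indicators: a pair of distinct vertices is an edge iff both of
its endpoints lie in `Sstar` or its indicator is `true`. A set `S` is a clique of this
graph iff any two distinct vertices of `S` are adjacent. -/
def IsPlantedClique {n : ℕ} (Sstar : Finset (Fin n)) (ω : Sym2 (Fin n) → Bool)
    (S : Finset (Fin n)) : Prop :=
  ∀ u ∈ S, ∀ v ∈ S, u ≠ v → ((u ∈ Sstar ∧ v ∈ Sstar) ∨ ω s(u, v) = true)

lemma ofReal_one_sub_le_of_measure_compl_le {Ω : Type*} [MeasurableSpace Ω] {μ : Measure Ω}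
    [IsProbabilityMeasure μ] {s : Set Ω} {ε : ℝ} (hε : 0 ≤ ε)
    (h : μ sᶜ ≤ ENNReal.ofReal ε) : ENNReal.ofReal (1 - ε) ≤ μ s := by
  rw [ENNReal.ofReal_sub 1 hε, ENNReal.ofReal_one, tsub_le_iff_right]
  calc 1 = μ Set.univ := measure_univ.symm
    _ ≤ μ s + μ sᶜ := measure_univ_le_add_compl s
    _ ≤ μ s + ENNReal.ofReal ε := by gcongr

lemma measure_pi_bernoulli_forall_mem_eq_true {ι : Type*} [Fintype ι] (q : ℝ≥0) (hq : q ≤ 1)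
    (F : Finset ι) :
    Measure.pi (fun _ : ι => (PMF.bernoulli q hq).toMeasure) {ω | ∀ i ∈ F, ω i = true} =
      (q : ℝ≥0∞) ^ #F := by
  classical
  have hset : {ω : ι → Bool | ∀ i ∈ F, ω i = true} =
      Set.univ.pi fun i => if i ∈ F then {true} else Set.univ := by
    ext ω
    simp only [Set.mem_ofPred_eq, Set.mem_univ_pi]
    exact forall_congr' fun i => by split_ifs with hi <;> simp [hi]
  rw [hset, Measure.pi_pi]
  simp only [apply_ite, measure_univ, prod_ite_mem, univ_inter, prod_const,
    PMF.toMeasure_apply_singleton _ _ (measurableSet_singleton _), PMF.bernoulli_apply,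
    cond_true]

lemma pow_le_inv_of_log_div_log_inv_le {p x : ℝ} {m : ℕ} (hp0 : 0 < p) (hp1 : p < 1)
    (hx : 0 < x) (h : Real.log x / Real.log (1 / p) ≤ m) : p ^ m ≤ x⁻¹ := by
  have hlog : 0 < Real.log (1 / p) := Real.log_pos (one_lt_one_div hp0 hp1)
  rw [div_le_iff₀ hlog, one_div, Real.log_inv] at h
  rw [← Real.log_le_log_iff (by positivity) (by positivity), Real.log_pow, Real.log_inv]
  linarith

lemma choose_mul_choose_mul_pow_le {k N a b m : ℕ} {p : ℝ} (hp0 : 0 ≤ p) (hp1 : p ≤ 1)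
    (hk : 1 ≤ k) (hma : m ≤ a) (hab : k ≤ a + b) :
    (k.choose a * N.choose b : ℝ) * p ^ (a * b) ≤ (k * N * p ^ m) ^ b := by
  have hka : (k.choose a : ℝ) ≤ (k : ℝ) ^ b := by
    rcases le_or_gt a k with hak | hka
    · calc (k.choose a : ℝ) = k.choose (k - a) := by rw [Nat.choose_symm hak]
        _ ≤ (k : ℝ) ^ (k - a) := by exact_mod_cast Nat.choose_le_pow k (k - a)
        _ ≤ (k : ℝ) ^ b := pow_le_pow_right₀ (by exact_mod_cast hk) (by omega)
    · rw [Nat.choose_eq_zero_of_lt hka, Nat.cast_zero]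
      positivity
  have hNb : (N.choose b : ℝ) ≤ (N : ℝ) ^ b := by exact_mod_cast Nat.choose_le_pow N b
  have hpab : p ^ (a * b) ≤ (p ^ m) ^ b := by
    rw [pow_mul]
    exact pow_le_pow_left₀ (by positivity) (pow_le_pow_of_le_one hp0 hp1 hma) b
  rw [mul_pow, mul_pow]
  gcongr

lemma sum_Icc_pow_le_div_sq {n k : ℕ} (B : ℕ) {y : ℝ} (hn : 0 < n) (hkn : k ≤ n) (hy0 : 0 ≤ y)
    (hy : y ≤ k * (n - k) / n ^ 3) : ∑ b ∈ Icc 1 B, y ^ b ≤ k / n ^ 2 := by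
  have hn1 : (1 : ℝ) ≤ n := by exact_mod_cast hn
  have hkn' : (k : ℝ) ≤ n := by exact_mod_cast hkn
  have hk0 : (0 : ℝ) ≤ k := k.cast_nonneg
  rw [le_div_iff₀ (by positivity)] at hy
  have hy1 : y < 1 := by
    have h4 : 4 * (k * (n - k)) ≤ (n : ℝ) ^ 2 := by nlinarith [sq_nonneg ((n : ℝ) - 2 * k)]
    nlinarith [pow_le_pow_right₀ hn1 (show 2 ≤ 3 by norm_num)]
  rw [← Ico_add_one_right_eq_Icc]
  refine (geom_sum_Ico_le_of_lt_one hy0 hy1).trans ?_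
  rw [pow_one, div_le_div_iff₀ (by linarith) (by positivity)]
  have hyn2 : y * n ^ 2 ≤ k := le_of_mul_le_mul_right (by nlinarith) (by positivity : (0 : ℝ) < n)
  have hyn : y * n ≤ k :=
    (mul_le_mul_of_nonneg_left (le_self_pow₀ hn1 two_ne_zero) hy0).trans hyn2
  refine le_of_mul_le_mul_right ?_ (by positivity : (0 : ℝ) < n)
  nlinarith [mul_le_mul_of_nonneg_left hyn hk0]

section CrossEdges

variable {V : Type*} [DecidableEq V]

def allCrossEdges (T U : Finset V) : Set (Sym2 V → Bool) :=
  {ω | ∀ x ∈ T, ∀ y ∈ U, ω s(x, y) = true}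

lemma card_image_sym2Mk_product {T U : Finset V} (hTU : Disjoint T U) :
    #((T ×ˢ U).image fun z => s(z.1, z.2)) = #T * #U := by
  rw [card_image_of_injOn, card_product]
  rintro ⟨a, b⟩ hab ⟨c, d⟩ hcd h
  simp only [coe_product, Set.mem_prod, mem_coe] at hab hcd
  rcases Sym2.eq_iff.mp h with ⟨rfl, rfl⟩ | ⟨rfl, rfl⟩
  · rfl
  · exact (disjoint_left.mp hTU hab.1 hcd.2).elim

variable [Fintype V]

lemma measure_allCrossEdges (q : ℝ≥0) (hq : q ≤ 1) {T U : Finset V} (hTU : Disjoint T U) :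
    Measure.pi (fun _ : Sym2 V => (PMF.bernoulli q hq).toMeasure) (allCrossEdges T U) =
      (q : ℝ≥0∞) ^ (#T * #U) := by
  have hset : allCrossEdges T U =
      {ω | ∀ e ∈ (T ×ˢ U).image fun z => s(z.1, z.2), ω e = true} := by
    ext ω
    simp only [allCrossEdges, Set.mem_ofPred_eq, forall_mem_image, mem_product, and_imp,
      Prod.forall]
    exact ⟨fun h a b ha hb => h a ha b hb, fun h a ha b hb => h a b ha hb⟩
  rw [hset, measure_pi_bernoulli_forall_mem_eq_true, card_image_sym2Mk_product hTU]

def plantedBicliqueEvent (Sstar : Finset V) (a b : ℕ) : Set (Sym2 V → Bool) :=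
  ⋃ T ∈ Sstar.powersetCard a, ⋃ U ∈ Sstarᶜ.powersetCard b, allCrossEdges T U

lemma measure_plantedBicliqueEvent_le (q : ℝ≥0) (hq : q ≤ 1) (Sstar : Finset V) (a b : ℕ) :
    Measure.pi (fun _ : Sym2 V => (PMF.bernoulli q hq).toMeasure)
        (plantedBicliqueEvent Sstar a b) ≤
      (#Sstar).choose a * (#Sstarᶜ).choose b * (q : ℝ≥0∞) ^ (a * b) := by
  calc _ ≤ ∑ T ∈ Sstar.powersetCard a, ∑ U ∈ Sstarᶜ.powersetCard b,
          Measure.pi (fun _ : Sym2 V => (PMF.bernoulli q hq).toMeasure) (allCrossEdges T U) :=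
        (measure_biUnion_finset_le _ _).trans
          (sum_le_sum fun _ _ => measure_biUnion_finset_le _ _)
    _ = ∑ T ∈ Sstar.powersetCard a, ∑ U ∈ Sstarᶜ.powersetCard b, (q : ℝ≥0∞) ^ (a * b) := by
        refine sum_congr rfl fun T hT => sum_congr rfl fun U hU => ?_
        obtain ⟨hTS, rfl⟩ := mem_powersetCard.mp hT
        obtain ⟨hUS, rfl⟩ := mem_powersetCard.mp hU
        exact measure_allCrossEdges q hq (disjoint_of_subset_left hTS
          (disjoint_of_subset_right hUS disjoint_compl_right))
    _ = _ := by simp [card_powersetCard, mul_assoc]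

end CrossEdges

section PlantedClique

variable {n : ℕ}

lemma IsPlantedClique.mem_plantedBicliqueEvent {Sstar S : Finset (Fin n)}
    {ω : Sym2 (Fin n) → Bool} (h : IsPlantedClique Sstar ω S) {a b : ℕ}
    (ha : a ≤ #(S ∩ Sstar)) (hb : b ≤ #(S \ Sstar)) : ω ∈ plantedBicliqueEvent Sstar a b := by
  obtain ⟨T, hTS, rfl⟩ := exists_subset_card_eq ha
  obtain ⟨U, hUS, rfl⟩ := exists_subset_card_eq hb
  simp only [plantedBicliqueEvent, Set.mem_iUnion, mem_powersetCard]
  refine ⟨T, ⟨hTS.trans inter_subset_right, rfl⟩, U,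
    ⟨fun y hy => mem_compl.mpr (mem_sdiff.mp (hUS hy)).2, rfl⟩, fun x hx y hy => ?_⟩
  obtain ⟨hxS, hxSstar⟩ := mem_inter.mp (hTS hx)
  obtain ⟨hyS, hySstar⟩ := mem_sdiff.mp (hUS hy)
  exact (h x hxS y hyS fun hxy => hySstar (hxy ▸ hxSstar)).resolve_left fun h => hySstar h.2

def overlappingCliqueEvent (Sstar : Finset (Fin n)) (m : ℕ) : Set (Sym2 (Fin n) → Bool) :=
  {ω | ∃ S, IsPlantedClique Sstar ω S ∧ #Sstar ≤ #S ∧ S ≠ Sstar ∧ m ≤ #(S ∩ Sstar)}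

lemma overlappingCliqueEvent_subset (Sstar : Finset (Fin n)) (m : ℕ) :
    overlappingCliqueEvent Sstar m ⊆
      ⋃ b ∈ Icc 1 (max 1 (#Sstar - m)), plantedBicliqueEvent Sstar (max m (#Sstar - b)) b := by
  rintro ω ⟨S, hS, hcard, hne, hm⟩
  have hout : 1 ≤ #(S \ Sstar) := by
    by_contra! h0
    rw [Nat.lt_one_iff, card_eq_zero, sdiff_eq_empty_iff_subset] at h0
    exact hne (eq_of_subset_of_card_le h0 hcard)
  have hsplit := card_sdiff_add_card_inter S Sstar
  have hinter : #(S ∩ Sstar) ≤ #Sstar := card_le_card inter_subset_right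
  refine Set.mem_biUnion (x := max 1 (#Sstar - #(S ∩ Sstar))) ?_
    (hS.mem_plantedBicliqueEvent ?_ ?_)
  · simp only [coe_Icc, Set.mem_Icc]
    omega
  · omega
  · omega

lemma measure_overlappingCliqueEvent_le (q : ℝ≥0) (hq : q ≤ 1) (hn : 0 < n)
    (Sstar : Finset (Fin n)) (hk : 1 ≤ #Sstar) {m : ℕ} (hqm : (q : ℝ) ^ m ≤ ((n : ℝ) ^ 3)⁻¹) :
    Measure.pi (fun _ : Sym2 (Fin n) => (PMF.bernoulli q hq).toMeasure)
        (overlappingCliqueEvent Sstar m) ≤ ENNReal.ofReal (#Sstar / n ^ 2) := by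
  set y : ℝ := #Sstar * #Sstarᶜ * (q : ℝ) ^ m
  have hkn : #Sstar ≤ n := (card_le_univ Sstar).trans_eq (Fintype.card_fin n)
  have hy : y ≤ #Sstar * (n - #Sstar) / n ^ 3 := by
    have hN : (#Sstarᶜ : ℝ) = n - #Sstar := by
      rw [card_compl, Fintype.card_fin, Nat.cast_sub hkn]
    rw [div_eq_mul_inv, ← hN]
    exact mul_le_mul_of_nonneg_left hqm (by positivity)
  have hterm (b : ℕ) :
      ((#Sstar).choose (max m (#Sstar - b)) * (#Sstarᶜ).choose b : ℝ≥0∞) *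
          (q : ℝ≥0∞) ^ (max m (#Sstar - b) * b) ≤ ENNReal.ofReal (y ^ b) := by
    rw [← ENNReal.ofReal_coe_nnreal, ← ENNReal.ofReal_pow q.coe_nonneg, ← ENNReal.ofReal_natCast,
      ← ENNReal.ofReal_natCast, ← ENNReal.ofReal_mul (by positivity),
      ← ENNReal.ofReal_mul (by positivity)]
    exact ENNReal.ofReal_le_ofReal
      (choose_mul_choose_mul_pow_le q.coe_nonneg (by exact_mod_cast hq) hk (le_max_left _ _) (by omega))
  calc _ ≤ _ := measure_mono (overlappingCliqueEvent_subset Sstar m)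
    _ ≤ _ := measure_biUnion_finset_le _ _
    _ ≤ ∑ b ∈ Icc 1 (max 1 (#Sstar - m)), ENNReal.ofReal (y ^ b) :=
        sum_le_sum fun b _ => (measure_plantedBicliqueEvent_le q hq Sstar _ b).trans (hterm b)
    _ = ENNReal.ofReal (∑ b ∈ Icc 1 (max 1 (#Sstar - m)), y ^ b) :=
        (ENNReal.ofReal_sum_of_nonneg fun _ _ => by positivity).symm
    _ ≤ _ := ENNReal.ofReal_le_ofReal (sum_Icc_pow_le_div_sq _ hn hkn (by positivity) hy)

end PlantedClique

/-- Let `2 ≤ k ≤ n`, `0 < p < 1` and `Sstar ⊆ [n]` with `|Sstar| = k`. In the random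
graph where all pairs inside `Sstar` are edges and every other pair is an edge
independently with probability `p`, with probability at least `1 − k/n²`, every clique
`S` with `|S| ≥ k` and `S ≠ Sstar` satisfies `|S ∩ Sstar| ≤ 3·(log n)/(log(1/p))`. -/
theorem stmt_17 {n k : ℕ} (hk2 : 2 ≤ k) (hkn : k ≤ n) (p : ℝ)
    (hp0 : 0 < p) (hp1 : p < 1) (Sstar : Finset (Fin n)) (hScard : Sstar.card = k) :
    ENNReal.ofReal (1 - (k : ℝ) / (n : ℝ) ^ 2) ≤
      (Measure.pi fun _ : Sym2 (Fin n) =>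
          (PMF.bernoulli (Real.toNNReal p) (Real.toNNReal_le_one.mpr hp1.le)).toMeasure)
        {ω | ∀ S : Finset (Fin n), IsPlantedClique Sstar ω S → k ≤ S.card → S ≠ Sstar →
          ((S ∩ Sstar).card : ℝ) ≤ 3 * Real.log n / Real.log (1 / p)} := by
  have hn : 0 < n := by omega
  set t := 3 * Real.log n / Real.log (1 / p)
  have ht : 0 ≤ t :=
    div_nonneg (by positivity [Real.log_natCast_nonneg n])
      (Real.log_pos (one_lt_one_div hp0 hp1)).le
  have hpow : (p.toNNReal : ℝ) ^ (⌊t⌋₊ + 1) ≤ ((n : ℝ) ^ 3)⁻¹ := by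
    rw [Real.coe_toNNReal p hp0.le]
    refine pow_le_inv_of_log_div_log_inv_le hp0 hp1 (by positivity) ?_
    rw [Real.log_pow]
    push_cast
    exact (Nat.lt_floor_add_one t).le
  refine ofReal_one_sub_le_of_measure_compl_le (by positivity) ?_
  refine (measure_mono fun ω hω => ?_).trans (hScard ▸
    measure_overlappingCliqueEvent_le _ _ hn Sstar (by omega) hpow)
  simp only [Set.mem_compl_iff, Set.mem_ofPred_eq, not_forall, not_le] at hω
  obtain ⟨S, hS, hkS, hne, hlt⟩ := hω
  exact ⟨S, hS, hScard ▸ hkS, hne, (Nat.floor_lt ht).mpr hlt⟩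
end

section
/- There exists a constant c > 0 such that for all sufficiently large n, all k with 100·√n ≤ k ≤ n/2, and all integers ℓ with 1 ≤ ℓ ≤ c·n/k, with probability at least 0.99 over H drawn from B(k, n, 1/2) there exists a real symmetric positive semidefinite matrix X of size (k+n)×(k+n), with rows and columns indexed by U ⊔ V where U is the set of k left vertices and V the set of n right vertices of H, satisfying: 0 ≤ X(i,j) ≤ 1 for all indices i, j; ∑_{u∈U} X(u,u) = ℓ; ∑_{v∈V} X(v,v) = k − ℓ; ∑_{u∈U, v∈V} X(u,v) = ℓ·(k−ℓ); and X(u,v) = X(v,u) = 0 for every pair u ∈ U, v ∈ V that is not an edge of H. -/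
/-!
Take `c = 1/4` and let `S` be any `ℓ` left vertices. If `H` has a set `F` of `ℓ²(k - ℓ)` edges
between `S` and `V`, put `B = ℓ⁻¹ · 1_F` and let `X` be the Gram matrix of the columns of
`[D_S | B]`, `D_S` the 0/1 diagonal of `S`, i.e. `X = [[D_S, B], [Bᵀ, BᵀB]]`. It is PSD, vanishes
on non-edges, and has `U`-trace `ℓ`, cross sum `|F|/ℓ = ℓ(k - ℓ)` and `V`-trace `|F|/ℓ² = k - ℓ`;
its entries are at most `1` because every column of `B` has at most `ℓ` nonzero entries, each
`ℓ⁻¹`. Among the `ℓn` possible edges between `S` and `V` each is present with probability `1/2`,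
and `ℓ²(k - ℓ) ≤ ℓ²k ≤ ℓn/4` since `ℓk ≤ n/4`; by Chebyshev fewer than `ℓn/4` of them are present
with probability at most `4/(ℓn) ≤ 1/100` when `n ≥ 400`.
-/

open MeasureTheory

open ProbabilityTheory Finset Matrix

section CountTrue

variable {ι : Type*} [Fintype ι] (μ : ι → Measure Bool) [∀ i, IsProbabilityMeasure (μ i)]
  (F : Finset ι)

lemma integral_ite_eval_pi (i : ι) :
    ∫ ω, (if ω i = true then (1 : ℝ) else 0) ∂Measure.pi μ = (μ i).real {true} := by
  have h := integral_map (μ := Measure.pi μ) (measurable_pi_apply i).aemeasurable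
    (f := fun b : Bool => if b = true then (1 : ℝ) else 0)
    Measurable.of_discrete.aestronglyMeasurable
  rw [(measurePreserving_eval μ i).map_eq, integral_fintype .of_finite] at h
  simpa using h.symm

lemma integral_card_filter_pi :
    ∫ ω, (#{i ∈ F | ω i = true} : ℝ) ∂Measure.pi μ = ∑ i ∈ F, (μ i).real {true} := by
  simp_rw [natCast_card_filter]
  rw [integral_finsetSum _ fun i _ => .of_finite]
  exact sum_congr rfl fun i _ => integral_ite_eval_pi μ i

lemma variance_card_filter_pi_le :
    Var[fun ω => (#{i ∈ F | ω i = true} : ℝ); Measure.pi μ] ≤ #F / 4 := by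
  set X : ι → (ι → Bool) → ℝ := fun i ω => if ω i = true then 1 else 0
  have hsum : (fun ω => (#{i ∈ F | ω i = true} : ℝ)) = ∑ i ∈ F, X i := by
    ext ω; simp [X, Finset.sum_apply]
  have hindep : iIndepFun X (Measure.pi μ) :=
    iIndepFun_pi (X := fun _ (b : Bool) => if b = true then (1 : ℝ) else 0)
      fun _ => Measurable.of_discrete.aemeasurable
  rw [hsum, IndepFun.variance_sum (fun i _ => .of_discrete)
    fun i _ j _ hij => hindep.indepFun hij]
  calc ∑ i ∈ F, Var[X i; Measure.pi μ] ≤ ∑ _i ∈ F, ((1 - 0) / 2 : ℝ) ^ 2 :=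
        sum_le_sum fun i _ => variance_le_sq_of_bounded
          (ae_of_all _ fun ω => by by_cases h : ω i <;> simp [X, h])
          Measurable.of_discrete.aemeasurable
    _ = #F / 4 := by simp; ring

lemma pi_measure_abs_card_filter_sub_ge_le {t : ℝ} (ht : 0 < t) :
    Measure.pi μ {ω | t ≤ |(#{i ∈ F | ω i = true} : ℝ) - ∑ i ∈ F, (μ i).real {true}|} ≤
      ENNReal.ofReal (#F / (4 * t ^ 2)) := by
  rw [← integral_card_filter_pi]
  refine (meas_ge_le_variance_div_sq .of_discrete ht).trans (ENNReal.ofReal_le_ofReal ?_)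
  rw [← div_div]
  gcongr
  exact variance_card_filter_pi_le μ F

end CountTrue

lemma bipartiteER_half_abs_card_filter_sub_ge_le (k n : ℕ) (F : Finset (Fin k × Fin n)) {t : ℝ}
    (ht : 0 < t) :
    bipartiteER k n (1/2) (by norm_num) {H | t ≤ |(#{e ∈ F | H e = true} : ℝ) - #F / 2|} ≤
      ENNReal.ofReal (#F / (4 * t ^ 2)) := by
  unfold bipartiteER
  convert pi_measure_abs_card_filter_sub_ge_le _ F ht using 6
  · simp [measureReal_def, div_eq_mul_inv, ENNReal.toNNReal_ofNat, PMF.bernoulli]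
  · infer_instance

lemma bipartiteER_half_card_le_four_mul_card_filter_ge (k n : ℕ) (F : Finset (Fin k × Fin n))
    (hF : 400 ≤ #F) :
    ENNReal.ofReal 0.99 ≤
      bipartiteER k n (1/2) (by norm_num) {H | #F ≤ 4 * #{e ∈ F | H e = true}} := by
  set μ := bipartiteER k n (1/2) (by norm_num)
  have : IsProbabilityMeasure μ := by unfold μ bipartiteER; infer_instance
  have hF' : (400 : ℝ) ≤ #F := by exact_mod_cast hF
  set bad := {H : Fin k × Fin n → Bool | (#F : ℝ) / 4 ≤ |(#{e ∈ F | H e = true} : ℝ) - #F / 2|}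
  have hbad : μ bad ≤ ENNReal.ofReal 0.01 :=
    (bipartiteER_half_abs_card_filter_sub_ge_le k n F (by positivity)).trans <|
      ENNReal.ofReal_le_ofReal <| by
        rw [div_le_iff₀ (by positivity)]; nlinarith
  calc ENNReal.ofReal 0.99 = 1 - ENNReal.ofReal 0.01 := by
        rw [← ENNReal.ofReal_one, ← ENNReal.ofReal_sub _ (by norm_num)]; norm_num
    _ ≤ 1 - μ bad := tsub_le_tsub_left hbad _
    _ = μ badᶜ := (prob_compl_eq_one_sub .of_discrete).symm
    _ ≤ _ := measure_mono fun H hH => by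
        simp only [bad, Set.mem_compl_iff, Set.mem_ofPred_eq, not_le, abs_lt] at hH ⊢
        exact_mod_cast (by linarith [hH.1] : (#F : ℝ) ≤ 4 * #{e ∈ F | H e = true})

section BicliqueSDP

variable {U V : Type*} [Fintype U] {S : Finset U} {B : Matrix U V ℝ}

lemma transpose_mul_self_apply_le_inv_card (hB0 : ∀ u v, 0 ≤ B u v)
    (hB1 : ∀ u v, B u v ≤ (#S : ℝ)⁻¹) (hB : ∀ u ∉ S, ∀ v, B u v = 0) (v w : V) :
    (Bᵀ * B) v w ≤ (#S : ℝ)⁻¹ :=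
  calc (Bᵀ * B) v w = ∑ u ∈ S, B u v * B u w :=
        (sum_subset (subset_univ S) fun u _ hu => by simp [hB u hu]).symm
    _ ≤ ∑ _u ∈ S, (#S : ℝ)⁻¹ * (#S : ℝ)⁻¹ :=
        sum_le_sum fun u _ => mul_le_mul (hB1 u v) (hB1 u w) (hB0 u w) (by positivity)
    _ = (#S : ℝ)⁻¹ := by
        rcases (#S).eq_zero_or_pos with h | h
        · simp [h]
        · rw [sum_const, nsmul_eq_mul]; field_simp

section DecidableEq

variable [DecidableEq U]

def bicliqueGram (S : Finset U) (B : Matrix U V ℝ) : Matrix (U ⊕ V) (U ⊕ V) ℝ :=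
  fromBlocks (diagonal fun u => if u ∈ S then 1 else 0) B Bᵀ (Bᵀ * B)

lemma bicliqueGram_eq_conjTranspose_mul_self (hB : ∀ u ∉ S, ∀ v, B u v = 0) :
    bicliqueGram S B =
      (fromCols (diagonal fun u => if u ∈ S then 1 else 0) B)ᴴ *
        fromCols (diagonal fun u => if u ∈ S then 1 else 0) B := by
  rw [conjTranspose_fromCols_eq_fromRows_conjTranspose, fromRows_mul_fromCols]
  simp only [conjTranspose_eq_transpose_of_trivial, diagonal_transpose, bicliqueGram]
  congr 1
  · simp
  · ext u v; by_cases hu : u ∈ S <;> simp [hu, hB]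
  · ext v u; by_cases hu : u ∈ S <;> simp [hu, hB]

lemma bicliqueGram_apply_mem_Icc (hB0 : ∀ u v, 0 ≤ B u v)
    (hB1 : ∀ u v, B u v ≤ (#S : ℝ)⁻¹) (hB : ∀ u ∉ S, ∀ v, B u v = 0) (i j : U ⊕ V) :
    0 ≤ bicliqueGram S B i j ∧ bicliqueGram S B i j ≤ 1 := by
  have hS : (#S : ℝ)⁻¹ ≤ 1 := Nat.cast_inv_le_one _
  rcases i with u | v <;> rcases j with u' | w
  · by_cases h : u = u'
    · subst h; by_cases hu : u ∈ S <;> simp [bicliqueGram, hu]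
    · simp [bicliqueGram, h]
  · exact ⟨hB0 u w, (hB1 u w).trans hS⟩
  · exact ⟨hB0 u' v, (hB1 u' v).trans hS⟩
  · exact ⟨sum_nonneg fun u _ => mul_nonneg (hB0 u v) (hB0 u w),
      (transpose_mul_self_apply_le_inv_card hB0 hB1 hB v w).trans hS⟩

variable [Fintype V]

lemma posSemidef_bicliqueGram (hB : ∀ u ∉ S, ∀ v, B u v = 0) :
    (bicliqueGram S B).PosSemidef := by
  rw [bicliqueGram_eq_conjTranspose_mul_self hB]
  exact posSemidef_conjTranspose_mul_self _

lemma sum_bicliqueGram_inr_inr :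
    ∑ v, bicliqueGram S B (.inr v) (.inr v) = ∑ u, ∑ v, B u v ^ 2 := by
  simp only [bicliqueGram, fromBlocks_apply₂₂, mul_apply, transpose_apply, sq]
  exact sum_comm

end DecidableEq

variable [Fintype V]

def IsBicliqueSDPSolution (H : U × V → Bool) (a b : ℝ) (X : Matrix (U ⊕ V) (U ⊕ V) ℝ) : Prop :=
  X.PosSemidef ∧
  (∀ i j, 0 ≤ X i j ∧ X i j ≤ 1) ∧
  (∑ u, X (.inl u) (.inl u)) = a ∧
  (∑ v, X (.inr v) (.inr v)) = b ∧
  (∑ u, ∑ v, X (.inl u) (.inr v)) = a * b ∧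
  (∀ u v, H (u, v) = false → X (.inl u) (.inr v) = 0 ∧ X (.inr v) (.inl u) = 0)

lemma exists_isBicliqueSDPSolution (H : U × V → Bool) (hS : S.Nonempty) {r : ℕ}
    (hcount : #S ^ 2 * r ≤ #{e ∈ S ×ˢ univ | H e = true}) :
    ∃ X, IsBicliqueSDPSolution H #S r X := by
  classical
  obtain ⟨F, hFsub, hFcard⟩ := exists_subset_card_eq hcount
  have hF : ∀ u v, (u, v) ∈ F → u ∈ S ∧ H (u, v) = true := fun u v h => by
    simpa using hFsub h
  set B : Matrix U V ℝ := of fun u v => if (u, v) ∈ F then (#S : ℝ)⁻¹ else 0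
  have hB : ∀ u ∉ S, ∀ v, B u v = 0 := fun u hu v =>
    if_neg fun h => hu (hF u v h).1
  have hsum : ∀ c : ℝ, ∑ u, ∑ v, (if (u, v) ∈ F then c else 0) = #F * c := fun c => by
    rw [← sum_product', univ_product_univ, sum_ite_mem, univ_inter, sum_const, nsmul_eq_mul]
  have hS0 : (#S : ℝ) ≠ 0 := by simpa using hS.ne_empty
  refine ⟨bicliqueGram S B, posSemidef_bicliqueGram hB,
    bicliqueGram_apply_mem_Icc (fun u v => ?_) (fun u v => ?_) hB, by simp [bicliqueGram], ?_, ?_,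
    fun u v huv => ?_⟩
  · by_cases h : (u, v) ∈ F <;> simp [B, h]
  · by_cases h : (u, v) ∈ F <;> simp [B, h]
  · rw [sum_bicliqueGram_inr_inr]
    simp_rw [B, of_apply, ite_pow, zero_pow two_ne_zero, hsum, hFcard]
    push_cast
    field_simp
  · simp_rw [bicliqueGram, fromBlocks_apply₁₂, B, of_apply, hsum, hFcard]
    push_cast
    field_simp
  · have h : (u, v) ∉ F := fun h => by simpa [huv] using (hF u v h).2
    simp [bicliqueGram, B, h]

end BicliqueSDP

lemma biclique_parameter_bounds {n k ℓ : ℕ} (hk : 100 * √(n : ℝ) ≤ k)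
    (hℓ : (ℓ : ℝ) ≤ 1 / 4 * n / k) : ℓ ≤ k ∧ 4 * (ℓ ^ 2 * (k - ℓ)) ≤ ℓ * n := by
  rcases k.eq_zero_or_pos with rfl | hk0
  · have : (ℓ : ℝ) ≤ 0 := by simpa using hℓ
    have : ℓ = 0 := by exact_mod_cast this.antisymm ℓ.cast_nonneg
    simp [this]
  have hk0' : (0 : ℝ) < k := by exact_mod_cast hk0
  have hℓk : (ℓ : ℝ) * k ≤ n / 4 := by rw [le_div_iff₀ hk0'] at hℓ; linarith
  have hnk : (n : ℝ) ≤ k ^ 2 / 10000 := by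
    nlinarith [Real.sq_sqrt n.cast_nonneg, Real.sqrt_nonneg (n : ℝ)]
  have hle : ℓ ≤ k := by
    have : (ℓ : ℝ) ≤ k := by nlinarith
    exact_mod_cast this
  refine ⟨hle, ?_⟩
  have : (4 * (ℓ ^ 2 * (k - ℓ) : ℕ) : ℝ) ≤ ℓ * n := by
    push_cast [Nat.cast_sub hle]
    nlinarith [ℓ.cast_nonneg (α := ℝ)]
  exact_mod_cast this

/-- There is a constant `c > 0` such that for all sufficiently large `n`, all `k` with
`100·√n ≤ k ≤ n/2` and all integers `1 ≤ ℓ ≤ c·n/k`, with probability at least `0.99`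
over `H ∼ B(k, n, 1/2)`, the biclique SDP is feasible: there is a real PSD matrix `X`
indexed by `U ⊔ V` with `0 ≤ X(i,j) ≤ 1`, `∑_{u∈U} X(u,u) = ℓ`,
`∑_{v∈V} X(v,v) = k − ℓ`, `∑_{u∈U,v∈V} X(u,v) = ℓ·(k−ℓ)`, and `X(u,v) = X(v,u) = 0`
for every non-edge pair `u ∈ U, v ∈ V`. -/
theorem stmt_18 : ∃ c : ℝ, 0 < c ∧ ∃ n₀ : ℕ, ∀ n ≥ n₀, ∀ k ℓ : ℕ,
    100 * Real.sqrt n ≤ k → (k : ℝ) ≤ (n : ℝ) / 2 → 1 ≤ ℓ → (ℓ : ℝ) ≤ c * n / k →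
    ENNReal.ofReal 0.99 ≤
      bipartiteER k n (1/2) (by norm_num)
        {H | ∃ X : Matrix (Fin k ⊕ Fin n) (Fin k ⊕ Fin n) ℝ,
          X.PosSemidef ∧
          (∀ i j, 0 ≤ X i j ∧ X i j ≤ 1) ∧
          (∑ u : Fin k, X (.inl u) (.inl u)) = (ℓ : ℝ) ∧
          (∑ v : Fin n, X (.inr v) (.inr v)) = (k : ℝ) - ℓ ∧
          (∑ u : Fin k, ∑ v : Fin n, X (.inl u) (.inr v)) = (ℓ : ℝ) * ((k : ℝ) - ℓ) ∧
          (∀ u v, H (u, v) = false →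
            X (.inl u) (.inr v) = 0 ∧ X (.inr v) (.inl u) = 0)} := by
  refine ⟨1 / 4, by norm_num, 400, fun n hn k ℓ hk _ hℓ1 hℓ => ?_⟩
  obtain ⟨hℓk, hcount⟩ := biclique_parameter_bounds hk hℓ
  obtain ⟨S, -, hS⟩ := exists_subset_card_eq (s := (univ : Finset (Fin k))) (by simpa using hℓk)
  have hF : #(S ×ˢ (univ : Finset (Fin n))) = ℓ * n := by simp [hS]
  refine (bipartiteER_half_card_le_four_mul_card_filter_ge k n _ (by rw [hF]; nlinarith)).trans
    (measure_mono fun H hH => ?_)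
  have hedges : #S ^ 2 * (k - ℓ) ≤ #{e ∈ S ×ˢ univ | H e = true} := by
    rw [hS]; exact Nat.le_of_mul_le_mul_left (hcount.trans (hF ▸ hH)) four_pos
  obtain ⟨X, hX⟩ := exists_isBicliqueSDPSolution H (card_pos.mp (by omega)) hedges
  rw [hS, Nat.cast_sub hℓk] at hX
  exact ⟨X, hX⟩
end

section
/- Let k, n, ℓ be integers with 0 ≤ ℓ ≤ k−1, k ≥ 1, and 1 ≤ k−ℓ ≤ n/2. Define the planted distribution B(k, n, ℓ, 1/2) on bipartite graphs with left vertex set Fin k and right vertex set Fin n as follows: sample S : Fin k → Bool with each coordinate independently true with probability ℓ/k; sample P : Fin n → Bool with each coordinate independently true with probability (k−ℓ)/n; then, independently for each pair (u,v), include the edge (u,v) with probability 1 if S(u) and P(v) are both true, with probability (n/2 − (k−ℓ))/(n − (k−ℓ)) if S(u) is true and P(v) is false, and with probability 1/2 otherwise. For a finite set α of pairs (u,v), define χ_α = ∏_{(u,v)∈α} χ_{u,v}, where χ_{u,v} = 1 if (u,v) is an edge and −1 otherwise. Then for every finite nonempty set α of pairs, writing L for the number of distinct left vertices appearing in α and,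 for each right vertex v appearing in α, d_v for the number of pairs of α incident to v, one has E_{B(k,n,ℓ,1/2)}[χ_α] = (ℓ/k)^L · ∏_{v} [ (k−ℓ)/n + (1 − (k−ℓ)/n)·(−(k−ℓ)/(n−(k−ℓ)))^{d_v} ], where the product ranges over the distinct right vertices appearing in α. -/
open MeasureTheory

/-- The Bernoulli measure on `Bool` with success probability `x` (clamped to `[0,1]`;
for `x ∈ [0,1]` this is exactly the Bernoulli(`x`) measure). -/
noncomputable def bern (x : ℝ) : Measure Bool :=
  (PMF.bernoulli (min (Real.toNNReal x) 1) (min_le_right _ _)).toMeasure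

instance (x : ℝ) : IsProbabilityMeasure (bern x) :=
  inferInstanceAs (IsProbabilityMeasure (PMF.toMeasure _))

/-- The planted distribution `B(k, n, ℓ, 1/2)` on bipartite graphs with left vertex set
`Fin k` and right vertex set `Fin n`: sample `S : Fin k → Bool` with independent
Bernoulli(`ℓ/k`) coordinates and `P : Fin n → Bool` with independent
Bernoulli(`(k−ℓ)/n`) coordinates; then include each edge `(u,v)` independently with
probability `1` if `S u` and `P v`, probability `(n/2 − (k−ℓ))/(n − (k−ℓ))` if `S u`
and not `P v`, and probability `1/2` otherwise. -/
noncomputable def plantedModel (k n ℓ : ℕ) : Measure (Fin k × Fin n → Bool) :=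
  (Measure.pi fun _ : Fin k => bern ((ℓ : ℝ) / k)).bind fun S =>
    (Measure.pi fun _ : Fin n => bern (((k : ℝ) - ℓ) / n)).bind fun P =>
      Measure.pi fun uv : Fin k × Fin n =>
        bern (if S uv.1 then
                (if P uv.2 then 1
                 else ((n : ℝ) / 2 - ((k : ℝ) - ℓ)) / ((n : ℝ) - ((k : ℝ) - ℓ)))
              else 1 / 2)

/-!
Conditionally on the planted vectors `S` and `P` the edge signs are independent, and the sign
of `(u, v)` has mean `2 q - 1` where `q` is its edge probability: `0` unless `S u`, `1` if
`S u ∧ P v`, and `r = -(k-ℓ)/(n-(k-ℓ))` otherwise. So `E[χ_α | S, P]` vanishes unless all left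
vertices of `α` lie in `S`, and then equals `∏ r ^ d_v` over the right vertices `v ∉ P`.
Averaging over the independent coordinates of `P`, then of `S`, gives the product formula.
-/

open Finset ProbabilityTheory

lemma integral_bern {x : ℝ} (h0 : 0 ≤ x) (h1 : x ≤ 1) (f : Bool → ℝ) :
    ∫ b, f b ∂bern x = x * f true + (1 - x) * f false := by
  have hx : min (Real.toNNReal x) 1 = Real.toNNReal x :=
    min_eq_left (Real.toNNReal_le_one.2 h1)
  have h_true : (bern x).real {true} = x := by
    rw [measureReal_def, bern, PMF.toMeasure_apply_singleton _ _ (MeasurableSet.singleton _)]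
    simp [PMF.bernoulli_apply, hx, h0]
  have h_false : (bern x).real {false} = 1 - x := by
    rw [measureReal_def, bern, PMF.toMeasure_apply_singleton _ _ (MeasurableSet.singleton _)]
    simp only [PMF.bernoulli_apply, hx, Bool.cond_false]
    rw [ENNReal.coe_toReal, NNReal.coe_sub (Real.toNNReal_le_one.2 h1)]
    simp [h0]
  simp [integral_fintype Integrable.of_finite, h_true, h_false]

instance isProbabilityMeasure_bind_of_countable {A B : Type*} [MeasurableSpace A]
    [MeasurableSpace B] [Countable A] [MeasurableSingletonClass A]
    (μ : Measure A) [IsProbabilityMeasure μ]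
    (κ : A → Measure B) [∀ a, IsProbabilityMeasure (κ a)] :
    IsProbabilityMeasure (μ.bind κ) :=
  isProbabilityMeasure_bind (measurable_of_countable κ).aemeasurable (ae_of_all _ inferInstance)

lemma integral_bind_of_countable_of_finite {A B : Type*} [MeasurableSpace A] [MeasurableSpace B]
    [Countable A] [MeasurableSingletonClass A] [Finite B] [MeasurableSingletonClass B]
    (μ : Measure A) [IsProbabilityMeasure μ]
    (κ : A → Measure B) [∀ a, IsProbabilityMeasure (κ a)] (f : B → ℝ) :
    ∫ b, f b ∂(μ.bind κ) = ∫ a, ∫ b, f b ∂(κ a) ∂μ := by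
  have : IsMarkovKernel (Kernel.ofFunOfCountable κ) :=
    ⟨fun a => (inferInstance : IsProbabilityMeasure (κ a))⟩
  have hf : Integrable f (Kernel.ofFunOfCountable κ ∘ₘ μ) := .of_finite
  change ∫ b, f b ∂(Kernel.ofFunOfCountable κ ∘ₘ μ) = _
  rw [Measure.comp_eq_comp_const_apply] at hf ⊢
  exact Kernel.integral_comp hf

lemma integral_finset_prod_pi {𝕜 ι : Type*} [RCLike 𝕜] [Fintype ι] {E : ι → Type*}
    [∀ i, MeasurableSpace (E i)] (μ : ∀ i, Measure (E i)) [∀ i, IsProbabilityMeasure (μ i)]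
    (s : Finset ι) (f : ∀ i, E i → 𝕜) :
    ∫ x, ∏ i ∈ s, f i (x i) ∂Measure.pi μ = ∏ i ∈ s, ∫ y, f i y ∂μ i := by
  classical
  simp_rw [← Fintype.prod_extend_by_one s]
  rw [integral_fintype_prod_eq_prod (fun i y => if i ∈ s then f i y else 1)]
  refine Finset.prod_congr rfl fun i _ => ?_
  split_ifs <;> simp

lemma integral_prod_ite_pi_bern {ι : Type*} [Fintype ι] {x : ℝ} (h0 : 0 ≤ x) (h1 : x ≤ 1)
    (s : Finset ι) (a b : ι → ℝ) :
    ∫ P, ∏ i ∈ s, (if P i then a i else b i) ∂Measure.pi (fun _ => bern x) =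
      ∏ i ∈ s, (x * a i + (1 - x) * b i) := by
  refine (integral_finset_prod_pi (fun _ => bern x) s fun i c => if c then a i else b i).trans ?_
  exact Finset.prod_congr rfl fun i _ => by rw [integral_bern h0 h1]; simp

lemma integral_sign_bern {x : ℝ} (h0 : 0 ≤ x) (h1 : x ≤ 1) :
    ∫ b, (if b then (1 : ℝ) else -1) ∂bern x = 2 * x - 1 := by
  rw [integral_bern h0 h1]
  norm_num
  ring

lemma prod_boole_fst_mul_ite_snd {U V : Type*} [DecidableEq U] [DecidableEq V]
    (α : Finset (U × V)) (S : U → Bool) (P : V → Bool) (r : ℝ) :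
    ∏ e ∈ α, (if S e.1 then (1 : ℝ) else 0) * (if P e.2 then 1 else r) =
      (∏ u ∈ α.image Prod.fst, if S u then (1 : ℝ) else 0) *
        ∏ v ∈ α.image Prod.snd, if P v then 1 else r ^ #{e ∈ α | e.2 = v} := by
  rw [prod_mul_distrib, prod_comp (fun v => if P v then (1 : ℝ) else r) Prod.snd]
  congr 1
  · simp only [prod_boole, forall_mem_image]
  · simp only [ite_pow, one_pow]

noncomputable def plantedEdgeProb (q : ℝ) (s p : Bool) : ℝ :=
  if s then (if p then 1 else q) else 1 / 2

lemma plantedEdgeProb_mem_Icc {q : ℝ} (hq0 : 0 ≤ q) (hq1 : q ≤ 1) (s p : Bool) :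
    plantedEdgeProb q s p ∈ Set.Icc 0 1 := by
  cases s <;> cases p <;> simp [plantedEdgeProb, hq0, hq1] <;> norm_num

lemma two_mul_plantedEdgeProb_sub_one (q : ℝ) (s p : Bool) :
    2 * plantedEdgeProb q s p - 1 = (if s then 1 else 0) * (if p then 1 else 2 * q - 1) := by
  cases s <;> cases p <;> norm_num [plantedEdgeProb]

section Planted

variable {U V : Type*} [Fintype U] [Fintype V]

noncomputable def plantedMeasure (s p q : ℝ) : Measure (U × V → Bool) :=
  (Measure.pi fun _ : U => bern s).bind fun S =>
    (Measure.pi fun _ : V => bern p).bind fun P =>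
      Measure.pi fun uv : U × V => bern (plantedEdgeProb q (S uv.1) (P uv.2))

variable [DecidableEq U] [DecidableEq V]

lemma integral_prod_sign_pi_bern_plantedEdgeProb {q : ℝ} (hq0 : 0 ≤ q) (hq1 : q ≤ 1)
    (α : Finset (U × V)) (S : U → Bool) (P : V → Bool) :
    ∫ H, ∏ e ∈ α, (if H e then (1 : ℝ) else -1)
        ∂Measure.pi (fun uv : U × V => bern (plantedEdgeProb q (S uv.1) (P uv.2))) =
      (∏ u ∈ α.image Prod.fst, if S u then (1 : ℝ) else 0) *
        ∏ v ∈ α.image Prod.snd, if P v then 1 else (2 * q - 1) ^ #{e ∈ α | e.2 = v} := by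
  refine (integral_finset_prod_pi
    (fun uv : U × V => bern (plantedEdgeProb q (S uv.1) (P uv.2))) α
    fun _ b => if b then (1 : ℝ) else -1).trans ?_
  rw [← prod_boole_fst_mul_ite_snd]
  refine prod_congr rfl fun e _ => ?_
  obtain ⟨h0, h1⟩ := plantedEdgeProb_mem_Icc hq0 hq1 (S e.1) (P e.2)
  rw [integral_sign_bern h0 h1, two_mul_plantedEdgeProb_sub_one]

theorem integral_prod_sign_plantedMeasure {s p q : ℝ} (hs0 : 0 ≤ s) (hs1 : s ≤ 1)
    (hp0 : 0 ≤ p) (hp1 : p ≤ 1) (hq0 : 0 ≤ q) (hq1 : q ≤ 1) (α : Finset (U × V)) :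
    ∫ H, ∏ e ∈ α, (if H e then (1 : ℝ) else -1) ∂plantedMeasure s p q =
      s ^ #(α.image Prod.fst) *
        ∏ v ∈ α.image Prod.snd, (p + (1 - p) * (2 * q - 1) ^ #{e ∈ α | e.2 = v}) := by
  simp_rw [plantedMeasure, integral_bind_of_countable_of_finite,
    integral_prod_sign_pi_bern_plantedEdgeProb hq0 hq1, integral_const_mul,
    integral_prod_ite_pi_bern hp0 hp1, integral_mul_const, integral_prod_ite_pi_bern hs0 hs1]
  simp

end Planted

theorem stmt_19_general {k n ℓ : ℕ} (hkl : 1 ≤ k - ℓ)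
    (hn : (k : ℝ) - ℓ ≤ (n : ℝ) / 2)
    (α : Finset (Fin k × Fin n)) :
    ∫ H, (∏ e ∈ α, (if H e then (1 : ℝ) else -1)) ∂ plantedModel k n ℓ =
      ((ℓ : ℝ) / k) ^ (α.image Prod.fst).card *
        ∏ v ∈ α.image Prod.snd,
          (((k : ℝ) - ℓ) / n + (1 - ((k : ℝ) - ℓ) / n) *
            (-((k : ℝ) - ℓ) / ((n : ℝ) - ((k : ℝ) - ℓ)))
              ^ ((α.filter fun e => e.2 = v).card)) := by
  have hℓk : (ℓ : ℝ) + 1 ≤ k := by exact_mod_cast (by omega : ℓ + 1 ≤ k)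
  have hn0 : (0 : ℝ) ≤ n := n.cast_nonneg
  have h2q : 2 * (((n : ℝ) / 2 - ((k : ℝ) - ℓ)) / ((n : ℝ) - ((k : ℝ) - ℓ))) - 1 =
      -((k : ℝ) - ℓ) / ((n : ℝ) - ((k : ℝ) - ℓ)) := by
    have : (n : ℝ) - ((k : ℝ) - ℓ) ≠ 0 := by linarith
    field_simp
    ring
  rw [show plantedModel k n ℓ = plantedMeasure _ _ _ from rfl,
    integral_prod_sign_plantedMeasure (by positivity)
      (div_le_one_of_le₀ (by linarith) k.cast_nonneg) (div_nonneg (by linarith) hn0) (div_le_one_of_le₀ (by linarith) hn0)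
      (div_nonneg (by linarith) (by linarith)) (div_le_one_of_le₀ (by linarith) (by linarith)),
    h2q]

/-- For `0 ≤ ℓ ≤ k − 1`, `k ≥ 1` and `1 ≤ k − ℓ ≤ n/2`, and any finite nonempty set `α`
of pairs, the expectation of `χ_α = ∏_{(u,v)∈α} χ_{u,v}` under `B(k, n, ℓ, 1/2)` equals
`(ℓ/k)^L · ∏_v [(k−ℓ)/n + (1 − (k−ℓ)/n)·(−(k−ℓ)/(n−(k−ℓ)))^{d_v}]`, where `L` is the
number of distinct left vertices of `α` and `d_v` the number of pairs of `α` incident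
to the right vertex `v`; the product runs over the distinct right vertices of `α`. -/
theorem stmt_19 {k n ℓ : ℕ} (hk : 1 ≤ k) (hℓ : ℓ ≤ k - 1) (hkl : 1 ≤ k - ℓ)
    (hn : (k : ℝ) - ℓ ≤ (n : ℝ) / 2)
    (α : Finset (Fin k × Fin n)) (hα : α.Nonempty) :
    ∫ H, (∏ e ∈ α, (if H e then (1 : ℝ) else -1)) ∂ plantedModel k n ℓ =
      ((ℓ : ℝ) / k) ^ (α.image Prod.fst).card *
        ∏ v ∈ α.image Prod.snd,
          (((k : ℝ) - ℓ) / n + (1 - ((k : ℝ) - ℓ) / n) *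
            (-((k : ℝ) - ℓ) / ((n : ℝ) - ((k : ℝ) - ℓ)))
              ^ ((α.filter fun e => e.2 = v).card)) :=
  stmt_19_general hkl hn α
end
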